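/- arXiv:1504.06257 — 12 statements merged into one kernel-verified Lean document; each statement's English description precedes it below -/
import Mathlib

section
/- Let P be a p×p matrix and Q a q×q matrix over a commutative ring, a ∈ R^q, b ∈ R^q. Then det J(P,a;Q,b) = det(P)·det(Q) − det([[P,1ᵀ],[1,0]])·det([[0,b],[aᵀ,Q]]), where [[P,1ᵀ],[1,0]] is P bordered by an all-ones column and row with 0 in the corner, and [[0,b],[aᵀ,Q]] is Q bordered by the row b and column a with 0 in the corner. -/
open Matrix

section AuxJoin

variable {R S : Type*} [CommRing R] [CommRing S] {p q : ℕ}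

/-- Difference of the two sides of the join determinant identity. -/
def joinExpr (P : Matrix (Fin p) (Fin p) R) (Q : Matrix (Fin q) (Fin q) R)
    (a b : Fin q → R) : R :=
  (Matrix.fromBlocks P (Matrix.of fun _ j => b j) (Matrix.of fun i _ => a i) Q).det -
    (P.det * Q.det -
      (Matrix.fromBlocks P (Matrix.of fun _ _ => (1 : R))
          (Matrix.of fun _ _ => (1 : R)) (0 : Matrix (Fin 1) (Fin 1) R)).det *
        (Matrix.fromBlocks (0 : Matrix (Fin 1) (Fin 1) R) (Matrix.of fun _ j => b j)
          (Matrix.of fun i _ => a i) Q).det)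

lemma joinExpr_map (f : R →+* S) (P : Matrix (Fin p) (Fin p) R) (Q : Matrix (Fin q) (Fin q) R)
    (a b : Fin q → R) :
    f (joinExpr P Q a b) =
      joinExpr (P.map f) (Q.map f) (fun i => f (a i)) (fun i => f (b i)) := by
  have hb : ((Matrix.of fun _ j => b j : Matrix (Fin p) (Fin q) R)).map f =
      Matrix.of fun _ j => f (b j) := by ext i j; simp
  have hb1 : ((Matrix.of fun _ j => b j : Matrix (Fin 1) (Fin q) R)).map f =
      Matrix.of fun _ j => f (b j) := by ext i j; simp
  have ha : ((Matrix.of fun i _ => a i : Matrix (Fin q) (Fin p) R)).map f =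
      Matrix.of fun i _ => f (a i) := by ext i j; simp
  have ha1 : ((Matrix.of fun i _ => a i : Matrix (Fin q) (Fin 1) R)).map f =
      Matrix.of fun i _ => f (a i) := by ext i j; simp
  have h1 : ((Matrix.of fun _ _ => (1 : R) : Matrix (Fin p) (Fin 1) R)).map f =
      Matrix.of fun _ _ => (1 : S) := by ext i j; simp
  have h1' : ((Matrix.of fun _ _ => (1 : R) : Matrix (Fin 1) (Fin p) R)).map f =
      Matrix.of fun _ _ => (1 : S) := by ext i j; simp
  have h0 : ((0 : Matrix (Fin 1) (Fin 1) R)).map f = 0 := Matrix.map_zero _ f.map_zero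
  simp only [joinExpr, map_sub, _root_.map_mul, RingHom.map_det, RingHom.mapMatrix_apply,
    Matrix.fromBlocks_map, hb, hb1, ha, ha1, h1, h1', h0]

lemma joinExpr_eq_zero_of_field {F : Type*} [Field F] {p q : ℕ}
    (P : Matrix (Fin p) (Fin p) F) (Q : Matrix (Fin q) (Fin q) F) (a b : Fin q → F)
    (hP : P.det ≠ 0) (hQ : Q.det ≠ 0) : joinExpr P Q a b = 0 := by
  haveI : Invertible P := P.invertibleOfIsUnitDet (isUnit_iff_ne_zero.mpr hP)
  haveI : Invertible Q := Q.invertibleOfIsUnitDet (isUnit_iff_ne_zero.mpr hQ)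
  set s : F := ∑ i, ∑ j, P⁻¹ i j with hs
  set t : F := ∑ k, ∑ l, b k * (Q⁻¹ k l * a l) with ht
  -- the rank-one middle product for Q
  have h1 : ∀ (r : ℕ),
      (Matrix.of fun (_ : Fin r) j => b j) * Q⁻¹ * (Matrix.of fun i (_ : Fin r) => a i) =
        Matrix.of fun _ _ => t := by
    intro r
    ext i j
    simp only [Matrix.mul_apply, Matrix.of_apply, ht, Finset.sum_mul, Finset.mul_sum]
    rw [Finset.sum_comm]
    exact Finset.sum_congr rfl fun k _ => Finset.sum_congr rfl fun l _ => by ring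
  have h1P : ∀ (r : ℕ),
      (Matrix.of fun (_ : Fin r) (_ : Fin p) => (1 : F)) * P⁻¹ * (Matrix.of fun (_ : Fin p) (_ : Fin r) => (1 : F)) =
        Matrix.of fun _ _ => s := by
    intro r
    ext i j
    simp only [Matrix.mul_apply, Matrix.of_apply, hs, Finset.sum_mul, Finset.mul_sum]
    rw [Finset.sum_comm]
    exact Finset.sum_congr rfl fun k _ => Finset.sum_congr rfl fun l _ => by ring
  -- determinant of P minus a constant matrix
  have h2 : (P - Matrix.of fun _ _ => t).det = P.det * (1 - t * s) := by
    have e : (P - Matrix.of fun _ _ => t) =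
        P + Matrix.replicateCol Unit (fun _ => -t) * Matrix.replicateRow Unit (fun _ => (1 : F)) := by
      ext i j
      simp [Matrix.mul_apply, sub_eq_add_neg]
    rw [e, Matrix.det_add_replicateCol_mul_replicateRow (ι := Unit) (isUnit_det_of_invertible P)]
    congr 1
    rw [det_unique]
    simp only [Matrix.add_apply, Matrix.one_apply_eq, Matrix.mul_apply,
      Matrix.replicateCol_apply, Matrix.replicateRow_apply, hs, Finset.sum_mul, Finset.mul_sum]
    have : ∑ x : Fin p, ∑ i : Fin p, 1 * P⁻¹ i x * -t =
        -∑ x : Fin p, ∑ i : Fin p, t * P⁻¹ x i := by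
      simp only [one_mul, mul_neg, Finset.sum_neg_distrib, neg_inj]
      rw [Finset.sum_comm]
      exact Finset.sum_congr rfl fun i _ => Finset.sum_congr rfl fun j _ => mul_comm _ _
    rw [this, sub_eq_add_neg]
  have hJ : (Matrix.fromBlocks P (Matrix.of fun _ j => b j) (Matrix.of fun i _ => a i) Q).det
      = Q.det * (P.det * (1 - t * s)) := by
    rw [Matrix.det_fromBlocks₂₂, invOf_eq_nonsing_inv, h1 p, h2]
  have hPb : (Matrix.fromBlocks P (Matrix.of fun _ _ => (1 : F))
      (Matrix.of fun _ _ => (1 : F)) (0 : Matrix (Fin 1) (Fin 1) F)).det = P.det * (-s) := by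
    rw [Matrix.det_fromBlocks₁₁, invOf_eq_nonsing_inv, h1P 1]
    congr 1
    rw [det_unique]
    simp
  have hQb : (Matrix.fromBlocks (0 : Matrix (Fin 1) (Fin 1) F) (Matrix.of fun _ j => b j)
      (Matrix.of fun i _ => a i) Q).det = Q.det * (-t) := by
    rw [Matrix.det_fromBlocks₂₂, invOf_eq_nonsing_inv, h1 1]
    congr 1
    rw [det_unique]
    simp
  rw [joinExpr, hJ, hPb, hQb]
  ring

end AuxJoin

/-- det J(P,a;Q,b) = det P · det Q − det [[P,1ᵀ],[1,0]] · det [[0,b],[aᵀ,Q]]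
for square blocks P (p×p) and Q (q×q). -/
theorem join_det_square_case {R : Type*} [CommRing R] {p q : ℕ}
    (P : Matrix (Fin p) (Fin p) R) (Q : Matrix (Fin q) (Fin q) R)
    (a b : Fin q → R) :
    (Matrix.fromBlocks P (Matrix.of fun _ j => b j) (Matrix.of fun i _ => a i) Q).det =
      P.det * Q.det -
        (Matrix.fromBlocks P (Matrix.of fun _ _ => (1 : R))
            (Matrix.of fun _ _ => (1 : R)) (0 : Matrix (Fin 1) (Fin 1) R)).det *
          (Matrix.fromBlocks (0 : Matrix (Fin 1) (Fin 1) R) (Matrix.of fun _ j => b j)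
            (Matrix.of fun i _ => a i) Q).det := by
  classical
  rw [← sub_eq_zero]
  show joinExpr P Q a b = 0
  -- generic matrices over a polynomial ring
  set A := MvPolynomial ((Fin p × Fin p) ⊕ ((Fin q × Fin q) ⊕ (Fin q ⊕ Fin q))) ℤ with hA
  let Pg : Matrix (Fin p) (Fin p) A := Matrix.of fun i j => MvPolynomial.X (Sum.inl (i, j))
  let Qg : Matrix (Fin q) (Fin q) A := Matrix.of fun i j => MvPolynomial.X (Sum.inr (Sum.inl (i, j)))
  let ag : Fin q → A := fun i => MvPolynomial.X (Sum.inr (Sum.inr (Sum.inl i)))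
  let bg : Fin q → A := fun j => MvPolynomial.X (Sum.inr (Sum.inr (Sum.inr j)))
  -- evaluation sending generic entries to the actual ones
  let f : A →+* R := MvPolynomial.eval₂Hom (Int.castRingHom R) fun v =>
    Sum.elim (fun ij => P ij.1 ij.2)
      (Sum.elim (fun ij => Q ij.1 ij.2) (Sum.elim a b)) v
  -- the identity holds generically
  have hgen : joinExpr Pg Qg ag bg = 0 := by
    have hinj := IsFractionRing.injective A (FractionRing A)
    apply hinj
    rw [map_zero, joinExpr_map (algebraMap A (FractionRing A))]
    have hdet : ∀ {n : ℕ} (M : Matrix (Fin n) (Fin n) A), M.det ≠ 0 →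
        (M.map (algebraMap A (FractionRing A))).det ≠ 0 := by
      intro n M hM h
      apply hM
      apply hinj
      rw [map_zero, RingHom.map_det]
      exact h
    -- an evaluation showing the generic determinants are nonzero
    let ev : A →+* ℤ := MvPolynomial.eval₂Hom (RingHom.id ℤ) fun v =>
      Sum.elim (fun ij => if ij.1 = ij.2 then 1 else 0)
        (Sum.elim (fun ij => if ij.1 = ij.2 then 1 else 0) (Sum.elim (fun _ => 0) fun _ => 0)) v
    have hPg : Pg.det ≠ 0 := by
      intro h0
      have h1 : ev Pg.det = (1 : ℤ) := by
        rw [RingHom.map_det]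
        have : ev.mapMatrix Pg = (1 : Matrix (Fin p) (Fin p) ℤ) := by
          ext i j
          simp only [Pg, ev, RingHom.mapMatrix_apply, Matrix.map_apply, Matrix.of_apply, Matrix.one_apply]
          exact MvPolynomial.eval₂Hom_X' _ _ _
        rw [this, det_one]
      rw [h0, map_zero] at h1
      exact one_ne_zero h1.symm
    have hQg : Qg.det ≠ 0 := by
      intro h0
      have h1 : ev Qg.det = (1 : ℤ) := by
        rw [RingHom.map_det]
        have : ev.mapMatrix Qg = (1 : Matrix (Fin q) (Fin q) ℤ) := by
          ext i j
          simp only [Qg, ev, RingHom.mapMatrix_apply, Matrix.map_apply, Matrix.of_apply, Matrix.one_apply]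
          exact MvPolynomial.eval₂Hom_X' _ _ _
        rw [this, det_one]
      rw [h0, map_zero] at h1
      exact one_ne_zero h1.symm
    exact joinExpr_eq_zero_of_field _ _ _ _ (hdet Pg hPg) (hdet Qg hQg)
  -- specialize
  have hmap := joinExpr_map f Pg Qg ag bg
  rw [hgen, map_zero] at hmap
  have hP : Pg.map f = P := by
    ext i j
    exact MvPolynomial.eval₂Hom_X' _ _ _
  have hQ : Qg.map f = Q := by
    ext i j
    exact MvPolynomial.eval₂Hom_X' _ _ _
  have ha : (fun i => f (ag i)) = a := by
    funext i
    exact MvPolynomial.eval₂Hom_X' _ _ _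
  have hb : (fun j => f (bg j)) = b := by
    funext j
    exact MvPolynomial.eval₂Hom_X' _ _ _
  rw [hP, hQ, ha, hb] at hmap
  exact hmap.symm
end

section
/- Let P be a (p+1)×p matrix and Q a q×(q+1) matrix over a commutative ring, a ∈ R^q, b ∈ R^{q+1}. Then det J(P,a;Q,b) = det([P | 1])·det([b; Q]), where [P | 1] is P with an all-ones column appended and [b; Q] is Q with the row b prepended. -/
open Matrix

section JoinAux

variable {R : Type*} [CommRing R] {p q : ℕ}

/-- The unitriangular row-operation matrix: subtracts from each row the next one. -/
def joinAuxTm (p : ℕ) (R : Type*) [CommRing R] : Matrix (Fin (p+1)) (Fin (p+1)) R :=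
  Matrix.of fun i j => (if j = i then (1:R) else 0) - (if (j:ℕ) = (i:ℕ)+1 then 1 else 0)

lemma joinAuxTm_det : (joinAuxTm p R).det = 1 := by
  rw [Matrix.det_of_upperTriangular]
  · apply Finset.prod_eq_one
    intro i _
    simp [joinAuxTm]
  · intro i j hij
    have hij' : (j:ℕ) < (i:ℕ) := hij
    have h1 : ¬ j = i := by simp [Fin.ext_iff]; omega
    have h2 : ¬ ((j:ℕ) = (i:ℕ)+1) := by omega
    simp [joinAuxTm, h1, h2]

lemma sum_joinAuxTm_castSucc (i : Fin p) (f : Fin (p+1) → R) :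
    ∑ x, joinAuxTm p R i.castSucc x * f x = f i.castSucc - f i.succ := by
  have key : ∀ x : Fin (p+1), joinAuxTm p R i.castSucc x * f x =
      (if x = i.castSucc then f x else 0) - (if x = i.succ then f x else 0) := by
    intro x
    have h : ((x:ℕ) = (i.castSucc:ℕ)+1) ↔ x = i.succ := by
      simp [Fin.ext_iff]
    simp only [joinAuxTm, of_apply, sub_mul, ite_mul, one_mul, zero_mul, h]
  rw [Finset.sum_congr rfl fun x _ => key x, Finset.sum_sub_distrib,
    Finset.sum_ite_eq', Finset.sum_ite_eq']
  simp

lemma sum_joinAuxTm_last (f : Fin (p+1) → R) :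
    ∑ x, joinAuxTm p R (Fin.last p) x * f x = f (Fin.last p) := by
  have key : ∀ x : Fin (p+1), joinAuxTm p R (Fin.last p) x * f x =
      if x = Fin.last p then f x else 0 := by
    intro x
    have h2 : ¬ ((x:ℕ) = (Fin.last p : Fin (p+1)).val + 1) := by
      have := x.isLt
      simp only [Fin.val_last]
      omega
    simp only [joinAuxTm, of_apply, h2, if_false, sub_zero, ite_mul, one_mul, zero_mul]
  rw [Finset.sum_congr rfl fun x _ => key x, Finset.sum_ite_eq']
  simp

lemma join_det_snoc_one (P : Matrix (Fin (p+1)) (Fin p) R) :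
    (Matrix.of fun i : Fin (p + 1) => Fin.snoc (P i) (1 : R)).det =
      (Matrix.of fun i j : Fin p => P i.castSucc j - P i.succ j).det := by
  set Pm := Matrix.of fun i : Fin (p + 1) => Fin.snoc (P i) (1 : R) with hPm
  have h1 : Pm.det = (joinAuxTm p R * Pm).det := by rw [det_mul, joinAuxTm_det, one_mul]
  rw [h1, ← Matrix.det_submatrix_equiv_self (finSumFinEquiv : Fin p ⊕ Fin 1 ≃ Fin (p+1))]
  have e_inl : ∀ j : Fin p,
      (finSumFinEquiv : Fin p ⊕ Fin 1 ≃ Fin (p+1)) (Sum.inl j) = j.castSucc := by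
    intro j; simp [Fin.ext_iff]
  have e_inr : ∀ j : Fin 1,
      (finSumFinEquiv : Fin p ⊕ Fin 1 ≃ Fin (p+1)) (Sum.inr j) = Fin.last p := by
    intro j; simp [Fin.ext_iff, Fin.fin_one_eq_zero j]
  have hP : ∀ (z : Fin (p+1)) (j : Fin p), Pm z j.castSucc = P z j := by
    intro z j; simp [hPm]
  have hlast : ∀ z : Fin (p+1), Pm z (Fin.last p) = 1 := by
    intro z; simp [hPm]
  have hmat : (joinAuxTm p R * Pm).submatrix finSumFinEquiv finSumFinEquiv =
      fromBlocks (Matrix.of fun i j : Fin p => P i.castSucc j - P i.succ j)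
        0 (Matrix.of fun (_ : Fin 1) j => P (Fin.last p) j) 1 := by
    ext x y
    rcases x with i | i <;> rcases y with j | j <;>
      simp only [submatrix_apply, e_inl, e_inr, Matrix.mul_apply, fromBlocks_apply₁₁,
        fromBlocks_apply₁₂, fromBlocks_apply₂₁, fromBlocks_apply₂₂, sum_joinAuxTm_castSucc,
        sum_joinAuxTm_last, hP, hlast, of_apply, Matrix.zero_apply, Matrix.one_apply]
    · simp
    · simp [Fin.fin_one_eq_zero]
  rw [hmat, det_fromBlocks_zero₁₂]
  simp

lemma join_det_main_aux (P : Matrix (Fin (p + 1)) (Fin p) R) (Q : Matrix (Fin q) (Fin (q + 1)) R)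
    (a : Fin q → R) (b : Fin (q + 1) → R)
    (e : Fin (p + 1) ⊕ Fin q ≃ Fin p ⊕ Fin (q + 1))
    (h1 : ∀ i : Fin p, e.symm (Sum.inl i) = Sum.inl i.castSucc)
    (h2 : e.symm (Sum.inr (0 : Fin (q + 1))) = Sum.inl (Fin.last p))
    (h3 : ∀ r : Fin q, e.symm (Sum.inr r.succ) = Sum.inr r) :
    ((Matrix.fromBlocks P (Matrix.of fun _ j => b j) (Matrix.of fun i _ => a i) Q).submatrix
        id e).det =
      (Matrix.of fun i : Fin (p + 1) => Fin.snoc (P i) (1 : R)).det *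
        (Matrix.of (Fin.cases (motive := fun _ => Fin (q + 1) → R) b Q)).det := by
  set M0 := Matrix.fromBlocks P (Matrix.of fun _ j => b j) (Matrix.of fun i _ => a i) Q with hM0
  set M' := M0.submatrix id e with hM'
  set L : Matrix (Fin (p+1) ⊕ Fin q) (Fin (p+1) ⊕ Fin q) R :=
    Matrix.fromBlocks (joinAuxTm p R) 0 0 1 with hL
  have hLdet : L.det = 1 := by
    rw [hL, det_fromBlocks_zero₁₂, joinAuxTm_det, det_one, one_mul]
  have hstep : M'.det = (L * M').det := by rw [det_mul, hLdet, one_mul]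
  rw [hstep, ← Matrix.det_submatrix_equiv_self e.symm (L * M')]
  have hMent : ∀ (z : Fin (p+1) ⊕ Fin q) (y : Fin p ⊕ Fin (q+1)),
      M' z (e.symm y) = M0 z y := by
    intro z y
    rw [hM', Matrix.submatrix_apply, Equiv.apply_symm_apply, id]
  have rowL : ∀ (k : Fin (p+1)) (c : Fin (p+1) ⊕ Fin q),
      (L * M') (Sum.inl k) c = ∑ x, joinAuxTm p R k x * M' (Sum.inl x) c := by
    intro k c
    rw [Matrix.mul_apply, Fintype.sum_sum_type]
    simp [hL]
  have rowR : ∀ (r : Fin q) (c : Fin (p+1) ⊕ Fin q),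
      (L * M') (Sum.inr r) c = M' (Sum.inr r) c := by
    intro r c
    rw [Matrix.mul_apply, Fintype.sum_sum_type]
    simp [hL, Matrix.one_apply]
  have hmat : (L * M').submatrix e.symm e.symm =
      Matrix.fromBlocks (Matrix.of fun i j : Fin p => P i.castSucc j - P i.succ j) 0
        (Matrix.of fun (r : Fin (q+1)) (j : Fin p) =>
          Fin.cases (motive := fun _ => R) (P (Fin.last p) j) (fun r' => a r') r)
        (Matrix.of (Fin.cases (motive := fun _ => Fin (q + 1) → R) b Q)) := by
    ext x y
    rcases x with i | r
    · rw [Matrix.submatrix_apply, h1 i, rowL, sum_joinAuxTm_castSucc]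
      rcases y with j | s
      · simp [hMent, hM0]
      · simp [hMent, hM0]
    · induction r using Fin.cases with
      | zero =>
        rw [Matrix.submatrix_apply, h2, rowL, sum_joinAuxTm_last]
        rcases y with j | s
        · simp [hMent, hM0]
        · simp [hMent, hM0]
          rfl
      | succ t =>
        rw [Matrix.submatrix_apply, h3 t, rowR]
        rcases y with j | s
        · simp [hMent, hM0]
        · simp [hMent, hM0]
          rfl
  rw [hmat, det_fromBlocks_zero₁₂, join_det_snoc_one]

end JoinAux

/-- det J(P,a;Q,b) = det [P | 1] · det [b; Q] when P is (p+1)×p and Q is q×(q+1),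
reading the join as a square matrix via the natural order-preserving identification
of row and column indices. -/
theorem join_det_offset_case {R : Type*} [CommRing R] {p q : ℕ}
    (P : Matrix (Fin (p + 1)) (Fin p) R) (Q : Matrix (Fin q) (Fin (q + 1)) R)
    (a : Fin q → R) (b : Fin (q + 1) → R) :
    ((Matrix.fromBlocks P (Matrix.of fun _ j => b j) (Matrix.of fun i _ => a i) Q).submatrix
        id
        (finSumFinEquiv.trans ((finCongr (by omega : (p + 1) + q = p + (q + 1))).trans
          finSumFinEquiv.symm))).det =
      (Matrix.of fun i : Fin (p + 1) => Fin.snoc (P i) (1 : R)).det *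
        (Matrix.of (Fin.cases (motive := fun _ => Fin (q + 1) → R) b Q)).det := by
  apply join_det_main_aux
  · intro i
    rw [Equiv.symm_apply_eq]
    simp only [Equiv.trans_apply, Equiv.eq_symm_apply, finCongr_apply,
      finSumFinEquiv_apply_left, finSumFinEquiv_apply_right]
    ext
    simp
  · rw [Equiv.symm_apply_eq]
    simp only [Equiv.trans_apply, Equiv.eq_symm_apply, finCongr_apply,
      finSumFinEquiv_apply_left, finSumFinEquiv_apply_right]
    ext
    simp
  · intro r
    rw [Equiv.symm_apply_eq]
    simp only [Equiv.trans_apply, Equiv.eq_symm_apply, finCongr_apply,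
      finSumFinEquiv_apply_left, finSumFinEquiv_apply_right]
    ext
    simp
    omega
end

section
/- If H_σ is an induced sub-signed-multidigraph of G_σ, then for every 1 ≤ i ≤ |V(H)|, the i-th critical ideal of H_σ is contained in the i-th critical ideal of G_σ: I_i(H_σ,X_H) ⊆ I_i(G_σ,X_G) (after identifying variables of H with the corresponding variables of G). In particular γ(H_σ) ≤ γ(G_σ). -/
open Matrix

/-- The ideal generated by all k×k minors of a square matrix. -/
noncomputable def minorsIdeal {R : Type*} [CommRing R] {ι : Type*} [Fintype ι]
    (M : Matrix ι ι R) (k : ℕ) : Ideal R :=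
  Ideal.span {d | ∃ r c : Fin k → ι, Function.Injective r ∧ Function.Injective c ∧
    d = (M.submatrix r c).det}

/-- The algebraic co-rank: the largest k such that the k-th minors ideal is the unit ideal. -/
noncomputable def corank {R : Type*} [CommRing R] {ι : Type*} [Fintype ι]
    (M : Matrix ι ι R) : ℕ :=
  sSup {k | minorsIdeal M k = ⊤}

lemma minorsIdeal_submatrix_le {R : Type*} [CommRing R] {n m : ℕ}
    (A : Matrix (Fin n) (Fin n) R) (f : Fin m → Fin n) (hf : Function.Injective f)
    (k : ℕ) : minorsIdeal (A.submatrix f f) k ≤ minorsIdeal A k := by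
  apply Ideal.span_le.2
  rintro d ⟨r, c, hr, hc, rfl⟩
  apply Ideal.subset_span
  exact ⟨f ∘ r, f ∘ c, hf.comp hr, hf.comp hc, by rw [Matrix.submatrix_submatrix]⟩

lemma minorsIdeal_ne_top_of_gt {R : Type*} [CommRing R] [Nontrivial R] {n : ℕ}
    (A : Matrix (Fin n) (Fin n) R) {k : ℕ} (hk : n < k) : minorsIdeal A k ≠ ⊤ := by
  have : {d | ∃ r c : Fin k → Fin n, Function.Injective r ∧ Function.Injective c ∧
      d = (A.submatrix r c).det} = ∅ := by
    ext d
    simp only [Set.mem_setOf_eq, Set.mem_empty_iff_false, iff_false]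
    rintro ⟨r, c, hr, hc, rfl⟩
    have := Fintype.card_le_of_injective r hr
    simp at this
    omega
  rw [minorsIdeal, this, Ideal.span_empty]
  exact bot_ne_top

/-- If L(H) is a principal submatrix of L(G) (induced subgraph), then
I_i(H) ⊆ I_i(G) for all 1 ≤ i ≤ m, and in particular γ(H) ≤ γ(G). -/
theorem critical_ideal_induced_subgraph {R : Type*} [CommRing R] [Nontrivial R]
    {n m : ℕ} (A : Matrix (Fin n) (Fin n) R) (f : Fin m → Fin n)
    (hf : Function.Injective f) :
    (∀ i : ℕ, 1 ≤ i → i ≤ m → minorsIdeal (A.submatrix f f) i ≤ minorsIdeal A i) ∧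
      corank (A.submatrix f f) ≤ corank A := by
  refine ⟨fun i _ _ => minorsIdeal_submatrix_le A f hf i, ?_⟩
  have hsub : {k | minorsIdeal (A.submatrix f f) k = ⊤} ⊆ {k | minorsIdeal A k = ⊤} := by
    intro k hk
    exact top_le_iff.1 (hk ▸ minorsIdeal_submatrix_le A f hf k)
  have hbdd : BddAbove {k | minorsIdeal A k = ⊤} := by
    refine ⟨n, fun k hk => ?_⟩
    by_contra h
    exact minorsIdeal_ne_top_of_gt A (by omega) hk
  rcases Set.eq_empty_or_nonempty {k | minorsIdeal (A.submatrix f f) k = ⊤} with h | h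
  · rw [corank, h, csSup_empty]; exact Nat.zero_le _
  · exact csSup_le_csSup hbdd h hsub
end

section
/- For the complete graph K_k on k vertices with generalized Laplacian L(K_k,X) (diagonal entries x₁,…,x_k, all off-diagonal entries −1), and for 1 ≤ l ≤ k−2, the (l+1)-th critical ideal satisfies I_{l+1}(K_k,X) = ⟨ ∏_{c∈C}(x_c+1) : C ⊆ [k], |C| = l ⟩. -/
open Matrix MvPolynomial

namespace CritIdealAux

variable {k l : ℕ}

/-- The target ideal. -/
noncomputable def I (k l : ℕ) : Ideal (MvPolynomial (Fin k) ℤ) :=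
  Ideal.span {p | ∃ C : Finset (Fin k), C.card = l ∧ p = ∏ c ∈ C, (X c + 1)}

lemma prod_mem_I {n : ℕ} (v : Fin n → Fin k) (hv : Function.Injective v)
    (T : Finset (Fin n)) (hT : l ≤ T.card) :
    (∏ j ∈ T, (X (v j) + 1)) ∈ I k l := by
  obtain ⟨T', hsub, hcard⟩ := Finset.exists_subset_card_eq hT
  rw [← Finset.prod_sdiff hsub]
  refine Ideal.mul_mem_left _ _ (Ideal.subset_span ⟨T'.image v, ?_, ?_⟩)
  · rw [Finset.card_image_of_injective _ hv, hcard]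
  · rw [Finset.prod_image (fun a _ b _ h => hv h)]

lemma det_mem_I (v : Fin (l + 1) → Fin k) (hv : Function.Injective v)
    (N : Matrix (Fin (l + 1)) (Fin (l + 1)) (MvPolynomial (Fin k) ℤ)) (i0 : Fin (l + 1))
    (h1 : ∀ i, i ≠ i0 → ∀ j, N i j = 0 ∨ N i j = X (v j) + 1) :
    N.det ∈ I k l := by
  rw [Matrix.det_apply']
  refine Ideal.sum_mem _ fun σ _ => Ideal.mul_mem_left _ _ ?_
  by_cases h0 : ∃ j, j ≠ σ⁻¹ i0 ∧ N (σ j) j = 0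
  · obtain ⟨j, _, hj⟩ := h0
    rw [Finset.prod_eq_zero (f := fun i => N (σ i) i) (Finset.mem_univ j) hj]
    exact Ideal.zero_mem _
  · push_neg at h0
    have hmatch : ∀ j ∈ Finset.univ.erase (σ⁻¹ i0), N (σ j) j = X (v j) + 1 := by
      intro j hj
      have hj' : j ≠ σ⁻¹ i0 := Finset.ne_of_mem_erase hj
      have hσ : σ j ≠ i0 := by
        intro h
        exact hj' (by simp [← h])
      rcases h1 (σ j) hσ j with h | h
      · exact absurd h (h0 j hj')
      · exact h
    rw [← Finset.mul_prod_erase _ _ (Finset.mem_univ (σ⁻¹ i0)),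
      Finset.prod_congr rfl hmatch]
    refine Ideal.mul_mem_left _ _ (prod_mem_I v hv _ ?_)
    rw [Finset.card_erase_of_mem (Finset.mem_univ _), Finset.card_univ, Fintype.card_fin]
    omega

lemma snoc_inj {n : ℕ} {α : Type*} (f : Fin n → α) (x : α) (hf : Function.Injective f)
    (hx : ∀ i, f i ≠ x) : Function.Injective (Fin.snoc f x : Fin (n + 1) → α) := by
  intro i j h
  induction i using Fin.lastCases with
  | last =>
    induction j using Fin.lastCases with
    | last => rfl
    | cast j =>
      rw [Fin.snoc_last, Fin.snoc_castSucc] at h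
      exact absurd h.symm (hx j)
  | cast i =>
    induction j using Fin.lastCases with
    | last =>
      rw [Fin.snoc_last, Fin.snoc_castSucc] at h
      exact absurd h (hx i)
    | cast j =>
      rw [Fin.snoc_castSucc, Fin.snoc_castSucc] at h
      rw [hf h]

end CritIdealAux

open CritIdealAux in
/-- For the complete graph K_k and 1 ≤ l ≤ k−2, the (l+1)-th critical ideal is
generated by the products ∏_{c∈C}(x_c+1) over subsets C of size l. -/
theorem critical_ideal_complete_graph {k l : ℕ} (hl : 1 ≤ l) (hlk : l ≤ k - 2) :
    minorsIdeal
        (Matrix.of fun i j : Fin k =>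
          if i = j then (X i : MvPolynomial (Fin k) ℤ) else -1) (l + 1) =
      Ideal.span {p | ∃ C : Finset (Fin k), C.card = l ∧ p = ∏ c ∈ C, (X c + 1)} := by
  have hk : l + 2 ≤ k := by omega
  set R := MvPolynomial (Fin k) ℤ with hR
  set M : Matrix (Fin k) (Fin k) R :=
    Matrix.of fun i j : Fin k => if i = j then (X i : R) else -1 with hM
  show minorsIdeal M (l + 1) = I k l
  apply le_antisymm
  · -- every (l+1)-minor lies in I
    rw [minorsIdeal, Ideal.span_le]
    rintro d ⟨r, c, hr, hc, rfl⟩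
    set A : Fin (l + 1) → Fin (l + 1) → R :=
      fun i j => if r i = c j then X (r i) + 1 else 0 with hA
    set B : Fin (l + 1) → Fin (l + 1) → R := fun _ _ => -1 with hB
    have hS : (M.submatrix r c : Fin (l + 1) → Fin (l + 1) → R) = A + B := by
      funext i j
      show M (r i) (c j) = A i j + B i j
      simp only [hM, hA, hB, Matrix.of_apply]
      split_ifs <;> ring
    have hdet : (M.submatrix r c).det =
        ∑ s : Finset (Fin (l + 1)), Matrix.detRowAlternating (s.piecewise A B) := by
      show Matrix.detRowAlternating (M.submatrix r c) = _
      rw [hS]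
      exact Matrix.detRowAlternating.toMultilinearMap.map_add_univ A B
    rw [SetLike.mem_coe, hdet]
    refine Ideal.sum_mem _ fun s _ => ?_
    by_cases hone : ∃ i0 : Fin (l + 1), ∀ i, i ≠ i0 → i ∈ s
    · obtain ⟨i0, hi0⟩ := hone
      refine det_mem_I c hc (s.piecewise A B) i0 ?_
      intro i hi j
      have his : i ∈ s := hi0 i hi
      have hpw : s.piecewise A B i j = A i j := by
        rw [Finset.piecewise_eq_of_mem _ _ _ his]
      rw [hpw]
      simp only [hA]
      split_ifs with h
      · right; rw [h]
      · left; rfl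
    · -- at least two rows are the constant row, so the determinant vanishes
      push_neg at hone
      obtain ⟨i1, _, hi1s⟩ := hone ⟨0, Nat.succ_pos l⟩
      obtain ⟨i2, hne21, hi2s⟩ := hone i1
      have h12 : s.piecewise A B i2 = s.piecewise A B i1 := by
        rw [Finset.piecewise_eq_of_notMem _ _ _ hi1s, Finset.piecewise_eq_of_notMem _ _ _ hi2s]
      rw [Matrix.detRowAlternating.map_eq_zero_of_eq _ h12 hne21]
      exact Ideal.zero_mem _
  · -- every generator of I is (up to sign) an (l+1)-minor
    rw [I, Ideal.span_le]
    rintro p ⟨C, hC, rfl⟩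
    have hcompl : 1 < Cᶜ.card := by
      rw [Finset.card_compl, hC, Fintype.card_fin]
      omega
    obtain ⟨a, ha, b, hb, hab⟩ := Finset.one_lt_card.mp hcompl
    rw [Finset.mem_compl] at ha hb
    set e := C.orderEmbOfFin hC with he
    have hemem : ∀ i, e i ∈ C := fun i => C.orderEmbOfFin_mem hC i
    set r : Fin (l + 1) → Fin k := Fin.snoc (fun i => e i) a with hrdef
    set c : Fin (l + 1) → Fin k := Fin.snoc (fun i => e i) b with hcdef
    have hr : Function.Injective r :=
      snoc_inj _ _ (fun i j h => e.injective h) (fun i h => ha (h ▸ hemem i))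
    have hc : Function.Injective c :=
      snoc_inj _ _ (fun i j h => e.injective h) (fun i h => hb (h ▸ hemem i))
    set d : Fin (l + 1) → R := Fin.snoc (fun i => X (e i) + 1) 0 with hd
    set U : Matrix (Fin (l + 1)) (Fin (l + 1)) R :=
      Matrix.of fun i j => if j = Fin.last l then -1 else if i = j then d i else 0 with hU
    set V : Matrix (Fin (l + 1)) (Fin (l + 1)) R :=
      Matrix.of fun i j => if i = j then 1 else if i = Fin.last l then 1 else 0 with hV
    -- the submatrix factors as U * V
    have hfact : M.submatrix r c = U * V := by
      refine Matrix.ext fun i j => ?_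
      rw [Matrix.mul_apply]
      by_cases hj : j = Fin.last l
      · subst hj
        have hsum : ∀ m : Fin (l + 1), U i m * V m (Fin.last l) =
            if m = Fin.last l then U i (Fin.last l) else 0 := by
          intro m
          simp only [hV, Matrix.of_apply]
          split_ifs with h <;> simp [h]
        rw [Finset.sum_congr rfl fun m _ => hsum m, Finset.sum_ite_eq' _ (Fin.last l)]
        have hrib : r i ≠ c (Fin.last l) := by
          have hcb : c (Fin.last l) = b := Fin.snoc_last _ _
          rw [hcb]
          induction i using Fin.lastCases with
          | last => rw [hrdef]; simpa [Fin.snoc_last] using hab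
          | cast i =>
            rw [hrdef]
            simp only [Fin.snoc_castSucc]
            exact fun h => hb (h ▸ hemem i)
        simp [Matrix.submatrix_apply, hM, hU, hrib]
      · obtain ⟨j', rfl⟩ := Fin.exists_castSucc_eq.mpr hj
        have hVsplit : ∀ m : Fin (l + 1), V m j'.castSucc =
            (if m = j'.castSucc then (1 : R) else 0) +
              (if m = Fin.last l then 1 else 0) := by
          intro m
          simp only [hV, Matrix.of_apply]
          by_cases h1 : m = j'.castSucc
          · subst h1
            simp [hj]
          · by_cases h2 : m = Fin.last l
            · subst h2
              simp [h1, Ne.symm hj]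
            · simp [h1, h2]
        rw [Finset.sum_congr rfl fun m _ => by rw [hVsplit m]]
        simp only [mul_add, Finset.sum_add_distrib, mul_ite, mul_one, mul_zero,
          Finset.sum_ite_eq', Finset.mem_univ, if_true]
        have hUlast : U i (Fin.last l) = -1 := by simp [hU]
        have hUij : U i j'.castSucc = if i = j'.castSucc then d i else 0 := by
          simp [hU, hj]
        rw [hUlast, hUij]
        induction i using Fin.lastCases with
        | last =>
          have h1 : Fin.last l ≠ j'.castSucc := Ne.symm hj
          have h2 : r (Fin.last l) ≠ c j'.castSucc := by
            rw [hrdef, hcdef]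
            simp only [Fin.snoc_last, Fin.snoc_castSucc]
            exact fun h => ha (h ▸ hemem j')
          simp [Matrix.submatrix_apply, hM, h1, h2]
        | cast i =>
          by_cases hij : i = j'
          · subst hij
            have h2 : r i.castSucc = c i.castSucc := by
              rw [hrdef, hcdef]; simp only [Fin.snoc_castSucc]
            have hdi : d i.castSucc = X (e i) + 1 := by
              rw [hd]; simp only [Fin.snoc_castSucc]
            have hri : r i.castSucc = e i := by rw [hrdef]; simp only [Fin.snoc_castSucc]
            simp only [Matrix.submatrix_apply, hM, Matrix.of_apply]
            rw [if_pos h2, hri]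
            simp only [if_true, ite_true]
            rw [hdi]
            ring
          · have h1 : i.castSucc ≠ j'.castSucc := by
              simpa [Fin.castSucc_inj] using hij
            have h2 : r i.castSucc ≠ c j'.castSucc := by
              rw [hrdef, hcdef]
              simp only [Fin.snoc_castSucc]
              exact fun h => hij (e.injective h)
            simp [Matrix.submatrix_apply, hM, h1, h2]
    -- determinants of the factors
    have hCimg : C = Finset.image (fun i : Fin l => (e i : Fin k)) Finset.univ := by
      ext x
      simp only [Finset.mem_image, Finset.mem_univ, true_and]
      constructor
      · intro hx
        have : x ∈ Set.range (C.orderEmbOfFin hC) := by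
          rw [Finset.range_orderEmbOfFin]
          exact hx
        obtain ⟨i, hi⟩ := this
        exact ⟨i, hi⟩
      · rintro ⟨i, rfl⟩
        exact hemem i
    have hdetU : U.det = -∏ x ∈ C, (X x + 1) := by
      have htri : U.BlockTriangular id := by
        intro i j hij
        have h1 : j ≠ Fin.last l := ne_of_lt (lt_of_lt_of_le hij (Fin.le_last i))
        have h2 : i ≠ j := ne_of_gt hij
        simp [hU, h1, h2]
      rw [Matrix.det_of_upperTriangular htri, Fin.prod_univ_castSucc]
      have hlast : U (Fin.last l) (Fin.last l) = -1 := by simp [hU]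
      have hcast : ∀ i : Fin l, U i.castSucc i.castSucc = X (e i) + 1 := by
        intro i
        have h1 : i.castSucc ≠ Fin.last l := ne_of_lt (Fin.castSucc_lt_last i)
        simp [hU, h1, hd, Fin.snoc_castSucc]
      rw [hlast, Finset.prod_congr rfl fun i _ => hcast i]
      have himg : ∏ x ∈ C, ((X x : R) + 1) = ∏ i : Fin l, (X (e i) + 1) := by
        rw [hCimg, Finset.prod_image (fun a _ b _ h => e.injective h)]
      rw [himg]
      ring
    have hdetV : V.det = 1 := by
      have htriV : V.BlockTriangular OrderDual.toDual := by
        intro i j hij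
        have hij' : i < j := hij
        have h1 : i ≠ j := ne_of_lt hij'
        have h2 : i ≠ Fin.last l := ne_of_lt (lt_of_lt_of_le hij' (Fin.le_last j))
        simp [hV, h1, h2]
      rw [Matrix.det_of_lowerTriangular V htriV]
      simp [hV]
    have hdet : (M.submatrix r c).det = -∏ x ∈ C, (X x + 1) := by
      rw [hfact, Matrix.det_mul, hdetU, hdetV]
      ring
    have hmem : (M.submatrix r c).det ∈ minorsIdeal M (l + 1) :=
      Ideal.subset_span ⟨r, c, hr, hc, rfl⟩
    have hneg := (minorsIdeal M (l + 1)).neg_mem hmem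
    rw [hdet, neg_neg] at hneg
    exact hneg
end

section
/- Let Th_{2k} be the threshold graph defined recursively by Th₁ = K₁ and Th_{2i} = v_{2i} ⋈ Th_{2i−1} (join of a new vertex), Th_{2i+1} = v_{2i+1} ⊔ Th_{2i} (disjoint new vertex). Then the submatrix of the generalized Laplacian L(Th_{2k},X) with rows indexed by the even-labeled vertices {v₂,v₄,…,v_{2k}} and columns by the odd-labeled vertices {v₁,v₃,…,v_{2k−1}} is lower triangular with all diagonal entries equal to −1; hence its determinant is (−1)^k, and consequently the algebraic co-rank satisfies γ(Th_{2k}) ≥ k. -/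
open Matrix MvPolynomial

open scoped Classical

/-- For the threshold graph Th_{2k} (vertex with label j+1 at index j; a later vertex is
adjacent to all earlier ones iff its label is even, i.e. its index is odd), the submatrix
of the generalized Laplacian with rows the even-labeled vertices and columns the
odd-labeled vertices is lower triangular with diagonal −1, its determinant is (−1)^k,
and hence γ(Th_{2k}) ≥ k. -/
theorem threshold_graph_corank {k : ℕ} :
    let tAdj : Fin (2 * k) → Fin (2 * k) → Prop := fun a b =>
      (a < b ∧ (b : ℕ) % 2 = 1) ∨ (b < a ∧ (a : ℕ) % 2 = 1)
    let L : Matrix (Fin (2 * k)) (Fin (2 * k)) (MvPolynomial (Fin (2 * k)) ℤ) :=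
      Matrix.of fun a b => if a = b then X a else if tAdj a b then -1 else 0
    let r : Fin k → Fin (2 * k) := fun i => ⟨2 * i + 1, by have := i.isLt; omega⟩
    let c : Fin k → Fin (2 * k) := fun i => ⟨2 * i, by have := i.isLt; omega⟩
    (∀ i j : Fin k, ((i : ℕ) < (j : ℕ) → L (r i) (c j) = 0) ∧
        (i = j → L (r i) (c j) = -1)) ∧
      (L.submatrix r c).det = (-1) ^ k ∧ k ≤ corank L := by
  intro tAdj L r c
  have hentry : ∀ i j : Fin k, ((i : ℕ) < (j : ℕ) → L (r i) (c j) = 0) ∧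
      (i = j → L (r i) (c j) = -1) := by
    intro i j
    constructor
    · intro hij
      have hne : r i ≠ c j := by
        intro h
        have := congrArg Fin.val h
        simp only [r, c] at this; omega
      have hna : ¬ tAdj (r i) (c j) := by
        rintro (⟨_, h⟩ | ⟨h, _⟩)
        · simp only [c] at h; omega
        · simp only [r, c, Fin.lt_def] at h; omega
      simp only [L, Matrix.of_apply, if_neg hne, if_neg hna]
    · rintro rfl
      have hne : r i ≠ c i := by
        intro h
        have := congrArg Fin.val h
        simp only [r, c] at this; omega
      have ha : tAdj (r i) (c i) :=
        Or.inr ⟨by simp [r, c, Fin.lt_def], by simp only [r]; omega⟩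
      simp only [L, Matrix.of_apply, if_neg hne, if_pos ha]
  refine ⟨hentry, ?_⟩
  have hdet : (L.submatrix r c).det = (-1) ^ k := by
    rw [Matrix.det_of_lowerTriangular (L.submatrix r c)
      (fun i j h => (hentry i j).1 (by simpa using h))]
    have : ∀ i : Fin k, L.submatrix r c i i = -1 := fun i => (hentry i i).2 rfl
    rw [Finset.prod_congr rfl fun x _ => this x]
    simp
  refine ⟨hdet, ?_⟩
  have hrinj : Function.Injective r := by
    intro a b h
    have := congrArg Fin.val h
    simp only [r] at this
    exact Fin.ext (by omega)
  have hcinj : Function.Injective c := by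
    intro a b h
    have := congrArg Fin.val h
    simp only [c] at this
    exact Fin.ext (by omega)
  have hmem : ((-1 : MvPolynomial (Fin (2 * k)) ℤ)) ^ k ∈ minorsIdeal L k :=
    Ideal.subset_span ⟨r, c, hrinj, hcinj, hdet.symm⟩
  have htop : minorsIdeal L k = ⊤ :=
    Ideal.eq_top_of_isUnit_mem _ hmem (isUnit_one.neg.pow k)
  have hbdd : BddAbove {n | minorsIdeal L n = ⊤} := by
    refine ⟨2 * k, fun n hn => ?_⟩
    by_contra hle
    push_neg at hle
    have hempty : {d | ∃ r' c' : Fin n → Fin (2 * k), Function.Injective r' ∧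
        Function.Injective c' ∧ d = (L.submatrix r' c').det} = ∅ := by
      ext d
      simp only [Set.mem_setOf_eq, Set.mem_empty_iff_false, iff_false]
      rintro ⟨r', c', hr', _, _⟩
      have := Fintype.card_le_of_injective r' hr'
      simp at this
      omega
    simp only [Set.mem_setOf_eq] at hn
    have : minorsIdeal L n = ⊥ := by
      rw [minorsIdeal, hempty, Ideal.span_empty]
    rw [this] at hn
    exact (bot_ne_top : (⊥ : Ideal (MvPolynomial (Fin (2 * k)) ℤ)) ≠ ⊤) hn
  exact le_csSup hbdd htop
end

section
/- If H₁,…,H_l are graphs none of which is a complete graph, then the join H₁ ⋈ ⋯ ⋈ H_l contains as an induced subgraph the complete multipartite graph K_{2,2,…,2} (l parts of size 2), i.e. the graph K_l^{(1,…,1)} obtained from K_l by duplicating each vertex once; consequently γ(⋈_{i=1}^l H_i) ≥ γ(K_l^{(1,…,1)}) = l−1. -/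
open Matrix MvPolynomial

open scoped Classical

private def Bmat (m : ℕ) : Matrix (Fin m) (Fin m) ℤ :=
  Matrix.of fun i j => if (j : ℕ) ≠ 0 ∧ i = j then 0 else -1

private def Cmat (m : ℕ) : Matrix (Fin m) (Fin m) ℤ :=
  Matrix.of fun i j =>
    if (i : ℕ) = 0 ∧ (j : ℕ) = 0 then (m : ℤ) - 2
    else if (i : ℕ) = 0 ∨ (j : ℕ) = 0 then -1
    else if i = j then 1 else 0

private lemma Cmat_colsum (m : ℕ) (j : Fin m) :
    ∑ k : Fin m, Cmat m k j = if (j : ℕ) = 0 then -1 else 0 := by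
  have hm : 0 < m := j.pos
  by_cases hj : (j : ℕ) = 0
  · simp only [hj, if_true]
    have key : ∀ k : Fin m, Cmat m k j
        = -1 + (if k = ⟨0, hm⟩ then (m : ℤ) - 1 else 0) := by
      intro k
      by_cases hk : k = ⟨0, hm⟩
      · subst hk; simp [Cmat, hj]; ring
      · have hk' : (k : ℕ) ≠ 0 := fun h => hk (Fin.ext h)
        simp [Cmat, hj, hk', hk]
    rw [Finset.sum_congr rfl fun k _ => key k, Finset.sum_add_distrib,
      Finset.sum_const, Finset.sum_ite_eq' Finset.univ]
    simp
    ring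
  · simp only [hj, if_false]
    have key : ∀ k : Fin m, Cmat m k j
        = (if k = ⟨0, hm⟩ then (-1 : ℤ) else 0) + (if k = j then 1 else 0) := by
      intro k
      by_cases hk : k = ⟨0, hm⟩
      · subst hk
        have : ¬ ((⟨0, hm⟩ : Fin m) = j) := fun h => hj (by simp [← h])
        simp [Cmat, hj, this]
      · have hk' : (k : ℕ) ≠ 0 := fun h => hk (Fin.ext h)
        by_cases hkj : k = j
        · subst hkj; simp [Cmat, hk', hj, hk]
        · simp [Cmat, hk', hj, hkj, hk]
    rw [Finset.sum_congr rfl fun k _ => key k, Finset.sum_add_distrib,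
      Finset.sum_ite_eq' Finset.univ, Finset.sum_ite_eq' Finset.univ]
    simp

private lemma Bmat_mul_Cmat (m : ℕ) : Bmat m * Cmat m = 1 := by
  ext i j
  rw [Matrix.mul_apply]
  have key : ∀ k : Fin m, Bmat m i k * Cmat m k j
      = -Cmat m k j + (if k = i then (if (i : ℕ) ≠ 0 then Cmat m i j else 0) else 0) := by
    intro k
    by_cases hk : k = i
    · subst hk
      by_cases hi : (k : ℕ) = 0
      · simp [Bmat, hi]
      · simp only [Bmat, hi, ne_eq, not_false_iff, and_true, Matrix.of_apply, if_true,
          if_pos rfl]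
        ring
    · have h1 : ¬ ((k : ℕ) ≠ 0 ∧ i = k) := fun h => hk h.2.symm
      simp [Bmat, h1, hk]
  rw [Finset.sum_congr rfl fun k _ => key k, Finset.sum_add_distrib,
    Finset.sum_ite_eq' Finset.univ]
  rw [show (∑ k : Fin m, -Cmat m k j) = -∑ k : Fin m, Cmat m k j by
    rw [Finset.sum_neg_distrib], Cmat_colsum]
  simp only [Finset.mem_univ, if_true]
  by_cases hi : (i : ℕ) = 0
  · by_cases hj : (j : ℕ) = 0
    · have : i = j := Fin.ext (hi.trans hj.symm)
      simp [this, hj, hi, Matrix.one_apply]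
    · have : i ≠ j := fun h => hj (h ▸ hi)
      simp [hi, hj, this, Matrix.one_apply]
  · by_cases hj : (j : ℕ) = 0
    · have : i ≠ j := fun h => hi (h ▸ hj ▸ rfl)
      simp [hi, hj, this, Matrix.one_apply, Cmat]
    · by_cases hij : i = j
      · simp [hi, hj, hij, Matrix.one_apply, Cmat]
      · simp [hi, hj, hij, Matrix.one_apply, Cmat]

private lemma isUnit_det_Bmat (m : ℕ) : IsUnit (Bmat m).det :=
  Matrix.isUnit_det_of_right_inverse (Bmat_mul_Cmat m)


private lemma corank_ge {R : Type*} [CommRing R] [Nontrivial R] {ι : Type*} [Fintype ι]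
    (M : Matrix ι ι R) (k : ℕ) (h : minorsIdeal M k = ⊤) : k ≤ corank M := by
  apply le_csSup
  · refine ⟨Fintype.card ι, ?_⟩
    rintro k' hk'
    by_contra hlt
    push_neg at hlt
    have hempty : {d | ∃ r c : Fin k' → ι, Function.Injective r ∧ Function.Injective c ∧
        d = (M.submatrix r c).det} = ∅ := by
      ext d
      simp only [Set.mem_setOf_eq, Set.mem_empty_iff_false, iff_false]
      rintro ⟨r, c, hr, -, -⟩
      have := Fintype.card_le_of_injective r hr
      simp at this
      omega
    have : minorsIdeal M k' = ⊥ := by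
      rw [minorsIdeal, hempty, Ideal.span_empty]
    rw [Set.mem_setOf_eq, this] at hk'
    exact bot_ne_top hk'
  · exact h

/-- If H₁,…,H_l are graphs none of which is complete, then their join contains the
cocktail party graph K_{2,…,2} (l parts of size 2) as an induced subgraph, and
consequently γ(⋈ H_i) ≥ l − 1. -/
theorem join_of_noncomplete_contains_cocktail {l : ℕ} (n : Fin l → ℕ)
    (H : ∀ i, SimpleGraph (Fin (n i)))
    (hH : ∀ i, ∃ a b : Fin (n i), a ≠ b ∧ ¬ (H i).Adj a b) :
    let V := Σ i : Fin l, Fin (n i)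
    let JAdj : V → V → Prop := fun a b =>
      a.1 ≠ b.1 ∨ ∃ h : a.1 = b.1, (H b.1).Adj (h ▸ a.2) b.2
    let L : Matrix V V (MvPolynomial V ℤ) :=
      Matrix.of fun a b => if a = b then X a else if JAdj a b then -1 else 0
    (∃ f : Fin l × Fin 2 → V, Function.Injective f ∧
        ∀ p q : Fin l × Fin 2, JAdj (f p) (f q) ↔ p.1 ≠ q.1) ∧
      l - 1 ≤ corank L := by
  intro V JAdj L
  choose a b hab hnab using hH
  constructor
  · -- the induced cocktail party graph
    refine ⟨fun p => ⟨p.1, if p.2 = 0 then a p.1 else b p.1⟩, ?_, ?_⟩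
    · rintro ⟨i, s⟩ ⟨j, t⟩ hpq
      obtain ⟨h1, h2⟩ := Sigma.mk.inj_iff.mp hpq
      subst h1
      have h2' : (if s = 0 then a i else b i) = (if t = 0 then a i else b i) :=
        eq_of_heq h2
      by_cases hs : s = 0 <;> by_cases ht : t = 0
      · subst hs; subst ht; rfl
      · simp [hs, ht] at h2'; exact absurd h2' (hab i)
      · simp [hs, ht] at h2'; exact absurd h2'.symm (hab i)
      · have : s = t := by
          have hs' := s.isLt; have ht' := t.isLt
          have : (s : ℕ) ≠ 0 := fun h => hs (Fin.ext h)
          have : (t : ℕ) ≠ 0 := fun h => ht (Fin.ext h)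
          apply Fin.ext; omega
        subst this; rfl
    · rintro ⟨i, s⟩ ⟨j, t⟩
      show (i ≠ j ∨ ∃ h : i = j,
          (H j).Adj (h ▸ (if s = 0 then a i else b i)) (if t = 0 then a j else b j)) ↔ i ≠ j
      constructor
      · rintro (h | ⟨rfl, hadj⟩)
        · exact h
        · exfalso
          have hadj' : (H i).Adj (if s = 0 then a i else b i) (if t = 0 then a i else b i) :=
            hadj
          by_cases hs : s = 0 <;> by_cases ht : t = 0 <;>
            simp only [hs, ht, if_true, if_false, ite_true, ite_false] at hadj'
          · exact (H i).irrefl hadj'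
          · exact hnab i hadj'
          · exact hnab i hadj'.symm
          · exact (H i).irrefl hadj'
      · exact Or.inl
  · -- the corank bound
    apply corank_ge
    rcases Nat.lt_or_ge l 2 with hl | hl
    · -- l ≤ 1 : the 0×0 minor is 1
      have hl0 : l - 1 = 0 := by omega
      rw [hl0, Ideal.eq_top_iff_one]
      apply Ideal.subset_span
      exact ⟨Fin.elim0, Fin.elim0, fun x => x.elim0, fun x => x.elim0,
        (Matrix.det_fin_zero).symm⟩
    · have hl1 : l - 1 < l := by omega
      let e : Fin (l - 1) → Fin l := fun i => ⟨i, by omega⟩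
      let last : Fin l := ⟨l - 1, hl1⟩
      let r : Fin (l - 1) → V := fun i => ⟨e i, a (e i)⟩
      let c : Fin (l - 1) → V := fun i =>
        if (i : ℕ) = 0 then ⟨last, a last⟩ else ⟨e i, b (e i)⟩
      have he : Function.Injective e := by
        intro i j h
        have hv := congrArg Fin.val h
        exact Fin.ext hv
      have hr : Function.Injective r := by
        intro i j h
        exact he (congrArg Sigma.fst h)
      have hlaste : ∀ i : Fin (l - 1), e i ≠ last := by
        intro i h
        have := congrArg Fin.val h
        simp [e, last] at this
        omega
      have hc : Function.Injective c := by
        intro i j h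
        by_cases hi : (i : ℕ) = 0 <;> by_cases hj : (j : ℕ) = 0
        · exact Fin.ext (hi.trans hj.symm)
        · simp only [c, if_pos hi, if_neg hj] at h
          exact absurd (congrArg Sigma.fst h).symm (hlaste j)
        · simp only [c, if_neg hi, if_pos hj] at h
          exact absurd (congrArg Sigma.fst h) (hlaste i)
        · simp only [c, if_neg hi, if_neg hj] at h
          exact he (congrArg Sigma.fst h)
      have hsub : L.submatrix r c
          = (Bmat (l - 1)).map (Int.castRingHom (MvPolynomial V ℤ)) := by
        refine Matrix.ext fun i j => ?_
        simp only [Matrix.submatrix_apply, Matrix.map_apply]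
        by_cases hj : (j : ℕ) = 0
        · have hcj : c j = ⟨last, a last⟩ := if_pos hj
          have hfst : (r i).1 ≠ (c j).1 := by
            rw [hcj]; exact hlaste i
          have hne : r i ≠ c j := fun h => hfst (congrArg Sigma.fst h)
          have hadj : JAdj (r i) (c j) := Or.inl hfst
          show (if r i = c j then X (r i) else if JAdj (r i) (c j) then -1 else 0) = _
          rw [if_neg hne, if_pos hadj]
          simp [Bmat, hj]
        · have hcj : c j = ⟨e j, b (e j)⟩ := if_neg hj
          by_cases hij : i = j
          · subst hij
            have hne : r i ≠ c i := by
              rw [hcj]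
              intro h
              obtain ⟨-, h2⟩ := Sigma.mk.inj_iff.mp h
              exact hab (e i) (eq_of_heq h2)
            have hnadj : ¬ JAdj (r i) (c i) := by
              rw [hcj]
              rintro (h1 | ⟨h2, hadj⟩)
              · exact h1 rfl
              · exact hnab (e i) hadj
            show (if r i = c i then X (r i) else if JAdj (r i) (c i) then -1 else 0) = _
            rw [if_neg hne, if_neg hnadj]
            simp [Bmat, hj]
          · have hfst : (r i).1 ≠ (c j).1 := by
              rw [hcj]
              exact fun h => hij (he h)
            have hne : r i ≠ c j := fun h => hfst (congrArg Sigma.fst h)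
            have hadj : JAdj (r i) (c j) := Or.inl hfst
            show (if r i = c j then X (r i) else if JAdj (r i) (c j) then -1 else 0) = _
            rw [if_neg hne, if_pos hadj]
            simp [Bmat, hj, hij]
      have hunit : IsUnit (L.submatrix r c).det := by
        rw [hsub]
        rw [show ((Bmat (l - 1)).map ⇑(Int.castRingHom (MvPolynomial V ℤ)))
            = (Int.castRingHom (MvPolynomial V ℤ)).mapMatrix (Bmat (l - 1)) from rfl,
          ← RingHom.map_det]
        exact (isUnit_det_Bmat (l - 1)).map (Int.castRingHom (MvPolynomial V ℤ))
      exact Ideal.eq_top_of_isUnit_mem _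
        (Ideal.subset_span ⟨r, c, hr, hc, rfl⟩) hunit
end

section
/- If T is a twin-free simple tree on n ≥ 4 vertices, then its algebraic co-rank satisfies γ(T) ≥ ⌈(n+2)/2⌉. -/
open Matrix MvPolynomial

open scoped Classical

namespace TwinFreeAux

variable {V : Type*} [Fintype V] [DecidableEq V] (T : SimpleGraph V)

set_option linter.unusedSectionVars false

/-- at most one neighbor inside `s` -/
def sleaf (s : Finset V) (y : V) : Prop :=
  ∀ z1 ∈ s, ∀ z2 ∈ s, T.Adj y z1 → T.Adj y z2 → z1 = z2

def HQ (s : Finset V) : Prop :=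
  ∀ x ∈ s, ∀ a ∈ s, ∀ b ∈ s, sleaf T s a → sleaf T s b → T.Adj x a → T.Adj x b → a = b

def spath (s : Finset V) (l : List V) : Prop :=
  l.Nodup ∧ l.Chain' T.Adj ∧ ∀ x ∈ l, x ∈ s

def conn (s : Finset V) : Prop :=
  ∀ u ∈ s, ∀ v ∈ s, ∃ l, spath T s l ∧ l.head? = some u ∧ l.getLast? = some v

def Good (s : Finset V) (L : List (V × V)) : Prop :=
  (∀ p ∈ L, p.1 ∈ s ∧ p.2 ∈ s ∧ T.Adj p.1 p.2) ∧
  (L.map Prod.fst).Nodup ∧ (L.map Prod.snd).Nodup ∧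
  L.Pairwise (fun p q => p.1 ≠ q.2 ∧ ¬ T.Adj p.1 q.2)

def walkOfChain : (l : List V) → (hne : l ≠ []) → l.Chain' T.Adj →
    T.Walk (l.head hne) (l.getLast hne)
  | [a], _, _ => SimpleGraph.Walk.nil
  | a :: b :: t, _, hc =>
    (SimpleGraph.Walk.cons (List.isChain_cons_cons.mp hc).1
      (walkOfChain (b :: t) (by simp) (show (b :: t).Chain' T.Adj from (List.isChain_cons_cons.mp hc).2))).copy rfl
      (List.getLast_cons (by simp)).symm

lemma support_walkOfChain : ∀ (l : List V) (hne : l ≠ []) (hc : l.Chain' T.Adj),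
    (walkOfChain T l hne hc).support = l
  | [a], _, _ => rfl
  | a :: b :: t, _, hc => by
    rw [walkOfChain]
    exact (SimpleGraph.Walk.support_copy _ _ _).trans
      (congrArg (a :: ·) (support_walkOfChain (b :: t) _ _))

lemma chord (hac : T.IsAcyclic) {l : List V} (hnd : l.Nodup) (hc : l.Chain' T.Adj)
    {i j : ℕ} (hij : i + 2 ≤ j) (hj : j < l.length) :
    ¬ T.Adj (l[i]'(by omega)) (l[j]'hj) := by
  intro hadj
  set m : List V := (l.drop i).take (j - i + 1) with hm
  have hml : m.length = j - i + 1 := by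
    simp only [hm, List.length_take, List.length_drop]
    omega
  have hmg : ∀ (q : ℕ) (h : q < m.length), m[q]'h = l[i + q]'(by omega) := by
    intro q h
    simp only [hm, List.getElem_take, List.getElem_drop]
  have hmne : m ≠ [] := by
    intro h; rw [h] at hml; simp at hml
  have hmnd : m.Nodup := hnd.sublist ((List.take_sublist _ _).trans (List.drop_sublist _ _))
  have hmc : m.Chain' T.Adj := by
    rw [show m.Chain' T.Adj ↔ m.IsChain T.Adj from Iff.rfl, List.isChain_iff_getElem]
    intro q hq
    rw [hmg q (by omega), hmg (q + 1) (by omega)]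
    have := (List.isChain_iff_getElem.mp hc) (i + q) (by omega)
    simpa [← Nat.add_assoc] using this
  have hhead : m.head hmne = l[i]'(by omega) := by
    rw [List.head_eq_getElem, hmg 0 (by omega)]
    simp
  have hlast : m.getLast hmne = l[j]'hj := by
    rw [List.getLast_eq_getElem, hmg (m.length - 1) (by omega)]
    congr 1
    omega
  have huniq := hac.path_unique
    ⟨(walkOfChain T m hmne hmc).copy hhead hlast, by
      rw [SimpleGraph.Walk.isPath_def, SimpleGraph.Walk.support_copy, support_walkOfChain]
      exact hmnd⟩ (SimpleGraph.Path.singleton hadj)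
  have h2 := congrArg (fun p : T.Path _ _ => p.1.support.length) huniq
  simp only [SimpleGraph.Walk.support_copy, support_walkOfChain,
    SimpleGraph.Path.singleton, SimpleGraph.Walk.support_cons,
    SimpleGraph.Walk.support_nil] at h2
  rw [hml] at h2
  simp at h2
  omega


lemma exists_max (s : Finset V) {u : V} (hu : u ∈ s) :
    ∃ l, spath T s l ∧ l ≠ [] ∧ ∀ l', spath T s l' → l'.length ≤ l.length := by
  have hbd : ∀ l', spath T s l' → l'.length ≤ s.card := by
    intro l' hl'
    have h1 : l'.toFinset ⊆ s := fun x hx => hl'.2.2 x (List.mem_toFinset.mp hx)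
    have := Finset.card_le_card h1
    rwa [List.toFinset_card_of_nodup hl'.1] at this
  set S : Set ℕ := {m | ∃ l, spath T s l ∧ l.length = m} with hS
  have hne : S.Nonempty := ⟨1, [u], ⟨by simp, List.isChain_singleton u, by simpa⟩, rfl⟩
  have hbdd : BddAbove S := ⟨s.card, by rintro m ⟨l, hl, rfl⟩; exact hbd l hl⟩
  obtain ⟨l, hl, hlen⟩ := Nat.sSup_mem hne hbdd
  refine ⟨l, hl, ?_, ?_⟩
  · intro h
    have h1 : (1 : ℕ) ≤ sSup S :=
      le_csSup hbdd ⟨[u], ⟨by simp, List.isChain_singleton u, by simpa⟩, rfl⟩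
    rw [← hlen] at h1
    rw [h] at h1
    simp at h1
  · intro l' hl'
    rw [hlen]
    exact le_csSup hbdd ⟨l', hl', rfl⟩


lemma spath_reverse {s : Finset V} {l : List V} (h : spath T s l) : spath T s l.reverse :=
  ⟨List.nodup_reverse.mpr h.1, List.isChain_reverse.mpr (List.IsChain.imp (fun a b hab => hab.symm) h.2.1),
    fun x hx => h.2.2 x (List.mem_reverse.mp hx)⟩

lemma head_nbr (hac : T.IsAcyclic) {s : Finset V} {l : List V} (hsp : spath T s l)
    (hmax : ∀ l', spath T s l' → l'.length ≤ l.length) (h2 : 2 ≤ l.length) :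
    ∀ w ∈ s, T.Adj (l[0]'(by omega)) w → w = l[1]'(by omega) := by
  intro w hw hadj
  by_cases hwl : w ∈ l
  · obtain ⟨j, hj, rfl⟩ := List.mem_iff_getElem.mp hwl
    match j, hj with
    | 0, hj => exact absurd hadj (T.irrefl)
    | 1, hj => rfl
    | (j+2), hj => exact absurd hadj (chord T hac hsp.1 hsp.2.1 (by omega) hj)
  · exfalso
    have hh : l.head? = some (l[0]'(by omega)) := by
      rw [List.head?_eq_head (by intro h; rw [h] at h2; simp at h2), List.head_eq_getElem]
    have hsp2 : spath T s (w :: l) := by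
      refine ⟨List.nodup_cons.mpr ⟨hwl, hsp.1⟩, List.isChain_cons.mpr ⟨?_, hsp.2.1⟩, ?_⟩
      · intro y hy
        have hy2 : y = l[0]'(by omega) := by
          rw [Option.mem_def, hh] at hy
          exact (Option.some.injEq _ _).mp hy.symm
        rw [hy2]
        exact hadj.symm
      · intro x hx
        rcases List.mem_cons.mp hx with h | h
        · rwa [h]
        · exact hsp.2.2 x h
    have := hmax _ hsp2
    simp at this

lemma head_sleaf (hac : T.IsAcyclic) {s : Finset V} {l : List V} (hsp : spath T s l)
    (hmax : ∀ l', spath T s l' → l'.length ≤ l.length) (h2 : 2 ≤ l.length) :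
    sleaf T s (l[0]'(by omega)) := by
  intro z1 h1 z2 hz2 a1 a2
  rw [head_nbr T hac hsp hmax h2 z1 h1 a1, head_nbr T hac hsp hmax h2 z2 hz2 a2]

lemma second_nbr (hac : T.IsAcyclic) {s : Finset V} {l : List V} (hHQ : HQ T s)
    (hsp : spath T s l)
    (hmax : ∀ l', spath T s l' → l'.length ≤ l.length) (h3 : 3 ≤ l.length) :
    ∀ w ∈ s, T.Adj (l[1]'(by omega)) w → w = l[0]'(by omega) ∨ w = l[2]'(by omega) := by
  intro w hw hadj
  by_cases hwl : w ∈ l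
  · obtain ⟨j, hj, rfl⟩ := List.mem_iff_getElem.mp hwl
    match j, hj with
    | 0, hj => exact Or.inl rfl
    | 1, hj => exact absurd hadj (T.irrefl)
    | 2, hj => exact Or.inr rfl
    | (j+3), hj =>
      exact absurd hadj (chord T hac hsp.1 hsp.2.1 (show 1 + 2 ≤ j + 3 by omega) hj)
  · exfalso
    obtain ⟨a, b, c, t, rfl⟩ : ∃ a b c t, l = a :: b :: c :: t := by
      match l, h3 with
      | a :: b :: c :: t, _ => exact ⟨a, b, c, t, rfl⟩
    have hadj' : T.Adj b w := hadj
    have hsp2 : spath T s (w :: b :: c :: t) := by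
      refine ⟨?_, ?_, ?_⟩
      · have h1 := List.nodup_cons.mp hsp.1
        exact List.nodup_cons.mpr ⟨fun h => hwl (List.mem_cons_of_mem a h), h1.2⟩
      · exact List.isChain_cons_cons.mpr ⟨hadj'.symm, (List.isChain_cons_cons.mp hsp.2.1).2⟩
      · intro x hx
        rcases List.mem_cons.mp hx with h | h
        · rwa [h]
        · exact hsp.2.2 x (List.mem_cons_of_mem a h)
    have hmax2 : ∀ l', spath T s l' → l'.length ≤ (w :: b :: c :: t).length := by
      intro l' h
      have := hmax l' h
      simpa using this
    have hslw : sleaf T s w := head_sleaf T hac hsp2 hmax2 (by simp)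
    have hsla : sleaf T s a := head_sleaf T hac hsp hmax (by simp)
    have hba : T.Adj b a := (List.isChain_cons_cons.mp hsp.2.1).1.symm
    have hbs : b ∈ s := hsp.2.2 b (by simp)
    have has : a ∈ s := hsp.2.2 a (by simp)
    have := hHQ b hbs a has w hw hsla hslw hba hadj'
    rw [this] at hwl
    exact hwl (by simp)


lemma good_of_spath (hac : T.IsAcyclic) {s : Finset V} {l : List V} (hsp : spath T s l)
    (h2 : 2 ≤ l.length) :
    ∃ L, Good T s L ∧ L.length = l.length - 1 := by
  have hget : ∀ i j (hi : i < l.length) (hj : j < l.length), l[i]'hi = l[j]'hj → i = j :=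
    fun i j hi hj h => hsp.1.getElem_inj_iff.mp h
  have hadj : ∀ i (h : i + 1 < l.length), T.Adj (l[i]'(by omega)) (l[i+1]'h) := by
    intro i h
    have := List.isChain_iff_getElem.mp hsp.2.1 i (by omega)
    simpa using this
  refine ⟨List.ofFn (fun i : Fin (l.length - 1) =>
    ((l[i.1]'(by omega)), (l[i.1+1]'(by omega)))), ⟨?_, ?_, ?_, ?_⟩, by simp⟩
  · intro p hp
    rw [List.mem_ofFn] at hp
    obtain ⟨i, hi⟩ := hp
    rw [← hi]
    exact ⟨hsp.2.2 _ (l.getElem_mem _), hsp.2.2 _ (l.getElem_mem _), hadj i.1 (by omega)⟩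
  · rw [List.map_ofFn, List.nodup_ofFn]
    intro i j h
    simp only [Function.comp_apply] at h
    exact Fin.ext (hget _ _ _ _ h)
  · rw [List.map_ofFn, List.nodup_ofFn]
    intro i j h
    simp only [Function.comp_apply] at h
    have := hget _ _ _ _ h
    exact Fin.ext (by omega)
  · rw [List.pairwise_iff_getElem]
    intro i j hi hj hij
    simp only [List.length_ofFn] at hi hj
    simp only [List.getElem_ofFn]
    constructor
    · intro h
      have := hget _ _ _ _ h
      omega
    · exact chord T hac hsp.1 hsp.2.1 (by omega) (by omega)

def gfun (c : ℕ) : ℕ := if c ≤ 3 then c - 1 else (c + 3) / 2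


lemma head_eq_of_head? {l : List V} {a : V} (h : l.head? = some a) :
    ∃ hl : 0 < l.length, l[0]'hl = a := by
  cases l with
  | nil => simp at h
  | cons z t => simp_all

lemma getLast_eq_of_getLast? {l : List V} {a : V} (h : l.getLast? = some a) :
    ∃ hl : 0 < l.length, l[l.length - 1]'(by omega) = a := by
  have hne : l ≠ [] := by rintro rfl; simp at h
  rw [List.getLast?_eq_getLast hne] at h
  have := (Option.some.injEq _ _).mp h
  exact ⟨List.length_pos_iff.mpr hne, by rw [← List.getLast_eq_getElem]; exact this⟩

lemma interior_two {l₀ : List V} {a b x : V} (hnd : l₀.Nodup) (hc : l₀.Chain' T.Adj)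
    (ha : l₀.head? = some a) (hb : l₀.getLast? = some b) (hx : x ∈ l₀)
    (hxa : x ≠ a) (hxb : x ≠ b) :
    ∃ y z, y ∈ l₀ ∧ z ∈ l₀ ∧ y ≠ z ∧ T.Adj x y ∧ T.Adj x z := by
  obtain ⟨j, hj, rfl⟩ := List.mem_iff_getElem.mp hx
  obtain ⟨h0, ha0⟩ := head_eq_of_head? ha
  obtain ⟨h1, hb1⟩ := getLast_eq_of_getLast? hb
  have hgi : ∀ i i' (hi : i < l₀.length) (hi' : i' < l₀.length),
      l₀[i]'hi = l₀[i']'hi' → i = i' := fun i i' hi hi' h => hnd.getElem_inj_iff.mp h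
  have hj0 : j ≠ 0 := by
    intro e; subst e; exact hxa ha0
  have hj1 : j ≠ l₀.length - 1 := by
    intro e; apply hxb; rw [← hb1]; congr 1
  have hadj : ∀ i (h : i + 1 < l₀.length), T.Adj (l₀[i]'(by omega)) (l₀[i+1]'h) := by
    intro i h
    have := List.isChain_iff_getElem.mp hc i (by omega)
    simpa using this
  refine ⟨l₀[j-1]'(by omega), l₀[j+1]'(by omega), List.getElem_mem _, List.getElem_mem _,
    ?_, ?_, ?_⟩
  · intro h; have := hgi _ _ _ _ h; omega
  · have := hadj (j-1) (by omega)
    simp only [show j - 1 + 1 = j from by omega] at this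
    exact this.symm
  · exact hadj j (by omega)

lemma second_of_path {s : Finset V} {l' : List V} {x v : V} (hsp' : spath T s l')
    (hh : l'.head? = some x) (hlast : l'.getLast? = some v) (hxv : x ≠ v) :
    ∃ y, y ∈ s ∧ T.Adj x y ∧ x ≠ y := by
  cases l' with
  | nil => simp at hh
  | cons z t =>
    have hzx : z = x := by simpa using hh
    subst hzx
    cases t with
    | nil => simp_all
    | cons y t' =>
      have hadj : T.Adj z y := (List.isChain_cons_cons.mp hsp'.2.1).1
      exact ⟨y, hsp'.2.2 y (by simp), hadj, hadj.ne⟩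

lemma len4 (hac : T.IsAcyclic) {s : Finset V} {l : List V} (hq : HQ T s) (hsp : spath T s l)
    (hmax : ∀ l', spath T s l' → l'.length ≤ l.length) (hl3 : 3 ≤ l.length) :
    4 ≤ l.length := by
  by_contra hcon
  obtain ⟨a, m, b, rfl⟩ : ∃ a m b, l = [a, m, b] := by
    match l, hl3, hcon with
    | a :: m :: b :: t, _, hcon =>
      cases t with
      | nil => exact ⟨a, m, b, rfl⟩
      | cons c t' => exfalso; apply hcon; simp
  have hsprev : spath T s [b, m, a] := by
    have := spath_reverse T hsp
    simpa using this
  have hmaxrev : ∀ l', spath T s l' → l'.length ≤ ([b, m, a] : List V).length := by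
    intro l' h'
    simpa using hmax l' h'
  have hsla : sleaf T s a := head_sleaf T hac hsp hmax (by simp)
  have hslb : sleaf T s b := head_sleaf T hac hsprev hmaxrev (by simp)
  have hnd := hsp.1
  have hab : a ≠ b := by simp at hnd; tauto
  have ham : T.Adj a m := (List.isChain_cons_cons.mp hsp.2.1).1
  have hmb : T.Adj m b := (List.isChain_cons_cons.mp (List.isChain_cons_cons.mp hsp.2.1).2).1
  exact hab (hq m (hsp.2.2 m (by simp)) a (hsp.2.2 a (by simp)) b (hsp.2.2 b (by simp))
    hsla hslb ham.symm hmb)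

lemma len5 (hac : T.IsAcyclic) {s : Finset V} {l : List V} (hq : HQ T s)
    (hconn : conn T s) (hsp : spath T s l)
    (hmax : ∀ l', spath T s l' → l'.length ≤ l.length) (h5 : s.card = 5)
    (hl4 : 4 ≤ l.length) :
    5 ≤ l.length := by
  by_contra hcon
  obtain ⟨a, b, c, d, rfl⟩ : ∃ a b c d, l = [a, b, c, d] := by
    match l, hl4, hcon with
    | a :: b :: c :: d :: t, _, hcon =>
      cases t with
      | nil => exact ⟨a, b, c, d, rfl⟩
      | cons e t' => exfalso; apply hcon; simp
  have hsprev : spath T s [d, c, b, a] := by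
    have := spath_reverse T hsp
    simpa using this
  have hmaxrev : ∀ l', spath T s l' → l'.length ≤ ([d, c, b, a] : List V).length := by
    intro l' h'
    simpa using hmax l' h'
  have hv_a : ∀ w ∈ s, T.Adj a w → w = b := head_nbr T hac hsp hmax (by simp)
  have hv_d : ∀ w ∈ s, T.Adj d w → w = c := head_nbr T hac hsprev hmaxrev (by simp)
  have hv_b : ∀ w ∈ s, T.Adj b w → w = a ∨ w = c := second_nbr T hac hq hsp hmax (by simp)
  have hv_c : ∀ w ∈ s, T.Adj c w → w = d ∨ w = b :=
    second_nbr T hac hq hsprev hmaxrev (by simp)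
  have hsub : ([a,b,c,d] : List V).toFinset ⊆ s := by
    intro y hy
    exact hsp.2.2 y (List.mem_toFinset.mp hy)
  have hcard4 : ([a,b,c,d] : List V).toFinset.card = 4 := by
    rw [List.toFinset_card_of_nodup hsp.1]
    rfl
  have hsd : (s \ ([a,b,c,d] : List V).toFinset).Nonempty := by
    rw [← Finset.card_pos, Finset.card_sdiff_of_subset hsub, hcard4, h5]
    omega
  obtain ⟨x, hxmem⟩ := hsd
  rw [Finset.mem_sdiff] at hxmem
  obtain ⟨hxs, hxl⟩ := hxmem
  rw [List.mem_toFinset] at hxl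
  have hxfin : x ∉ ([a,b,c,d] : List V) := hxl
  have hsfull : ∀ y ∈ s, y ∈ insert x ([a,b,c,d] : List V).toFinset := by
    intro y hy
    have hsubset : insert x ([a,b,c,d] : List V).toFinset ⊆ s :=
      Finset.insert_subset_iff.mpr ⟨hxs, hsub⟩
    have hci : (insert x ([a,b,c,d] : List V).toFinset).card = 5 := by
      rw [Finset.card_insert_of_notMem (fun h => hxfin (List.mem_toFinset.mp h)), hcard4]
    have := Finset.eq_of_subset_of_card_le hsubset (by omega)
    rw [this]
    exact hy
  have has : a ∈ s := hsp.2.2 a (by simp)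
  obtain ⟨l', hsp', hh', hl''⟩ := hconn x hxs a has
  obtain ⟨y, hys, hxy, hxny⟩ := second_of_path T hsp' hh' hl''
    (fun e => hxfin (e ▸ (by simp : a ∈ ([a,b,c,d] : List V))))
  have := hsfull y hys
  rw [Finset.mem_insert, List.mem_toFinset] at this
  rcases this with h | h
  · exact hxny h.symm
  · simp only [List.mem_cons, List.not_mem_nil, or_false] at h
    rcases h with rfl | rfl | rfl | rfl
    · have := hv_a x hxs hxy.symm
      exact hxfin (by simp [this])
    · rcases hv_b x hxs hxy.symm with rfl | rfl <;> exact hxfin (by simp)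
    · rcases hv_c x hxs hxy.symm with rfl | rfl <;> exact hxfin (by simp)
    · have := hv_d x hxs hxy.symm
      exact hxfin (by simp [this])


lemma arith1 {c : ℕ} (h : 6 ≤ c) : gfun c ≤ 1 + gfun (c - 2) := by
  unfold gfun; split_ifs <;> omega

lemma arith2 {c : ℕ} (h : 6 ≤ c) : gfun c ≤ 2 + gfun (c - 3) := by
  unfold gfun; split_ifs <;> omega

lemma base_le {c : ℕ} (h2 : 2 ≤ c) (h5 : c ≤ 5) : gfun c ≤ c - 1 := by
  unfold gfun; split_ifs <;> omega

lemma main (hac : T.IsAcyclic) :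
    ∀ (c : ℕ) (s : Finset V), s.card ≤ c → conn T s → 2 ≤ s.card →
      (s.card ≤ 3 ∨ HQ T s) →
      ∃ L, Good T s L ∧ gfun s.card ≤ L.length := by
  intro c
  induction c with
  | zero => intro s h1 _ h2 _; omega
  | succ c ih =>
    intro s hsc hconn h2 hinv
    have hsne : s.Nonempty := Finset.card_pos.mp (by omega)
    obtain ⟨u0, hu0⟩ := hsne
    obtain ⟨l, hsp, hlne, hmax⟩ := exists_max T s hu0
    -- length at least 2
    have hl2 : 2 ≤ l.length := by
      obtain ⟨a, ha, b, hb, hab⟩ := Finset.one_lt_card.mp (show 1 < s.card by omega)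
      obtain ⟨l', hsp', hh', hl''⟩ := hconn a ha b hb
      obtain ⟨y, hys, hay, hany⟩ := second_of_path T hsp' hh' hl'' hab
      have hlen' : 2 ≤ l'.length := by
        cases l' with
        | nil => simp at hh'
        | cons z t =>
          cases t with
          | nil => simp_all
          | cons w t' => simp
      exact le_trans hlen' (hmax l' hsp')
    -- length at least 3 when card ≥ 3
    have hl3 : 3 ≤ s.card → 3 ≤ l.length := by
      intro h3
      by_contra hcon
      have hlen2 : l.length = 2 := by omega
      have hall : ∀ a ∈ s, ∀ b ∈ s, a ≠ b → T.Adj a b := by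
        intro a ha b hb hab
        obtain ⟨l', hsp', hh', hl''⟩ := hconn a ha b hb
        have hle := hmax l' hsp'
        rw [hlen2] at hle
        match l', hle, hh', hl'', hsp' with
        | [x], _, hh', hl'', _ => 
          exfalso
          apply hab
          have h1 : x = a := by simpa using hh'
          have h2 : x = b := by simpa using hl''
          rw [← h1, h2]
        | [x, y], _, hh', hl'', hsp' =>
          have h1 : x = a := by simpa using hh'
          have h2 : y = b := by simpa using hl''
          have := (List.isChain_cons_cons.mp hsp'.2.1).1
          rwa [h1, h2] at this
      obtain ⟨a, ha⟩ := Finset.card_pos.mp (show 0 < s.card by omega)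
      have hcard2 : 2 ≤ (s.erase a).card := by
        rw [Finset.card_erase_of_mem ha]; omega
      obtain ⟨b', hb', c', hc', hbc'⟩ := Finset.one_lt_card.mp hcard2
      have hb's : b' ∈ s := Finset.mem_of_mem_erase hb'
      have hc's : c' ∈ s := Finset.mem_of_mem_erase hc'
      have hab' : a ≠ b' := fun e => (Finset.mem_erase.mp hb').1 e.symm
      have hac' : a ≠ c' := fun e => (Finset.mem_erase.mp hc').1 e.symm
      have hsp3 : spath T s [a, b', c'] := by
        refine ⟨by simp [hab', hac', hbc'], ?_, ?_⟩
        · exact List.isChain_cons_cons.mpr ⟨hall a ha b' hb's hab',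
            List.isChain_cons_cons.mpr ⟨hall b' hb's c' hc's hbc', List.isChain_singleton _⟩⟩
        · intro x hx
          simp only [List.mem_cons, List.not_mem_nil, or_false] at hx
          rcases hx with rfl | rfl | rfl <;> assumption
      have := hmax _ hsp3
      simp [hlen2] at this
    by_cases hbase : s.card ≤ 5
    · -- base case
      have hcl : s.card ≤ l.length := by
        rcases (show s.card = 2 ∨ s.card = 3 ∨ s.card = 4 ∨ s.card = 5 by omega) with
          h | h | h | h
        · omega
        · have := hl3 (by omega); omega
        · have hq := hinv.resolve_left (by omega)
          have := len4 T hac hq hsp hmax (hl3 (by omega)); omega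
        · have hq := hinv.resolve_left (by omega)
          have h4 := len4 T hac hq hsp hmax (hl3 (by omega))
          have := len5 T hac hq hconn hsp hmax h h4; omega
      obtain ⟨L, hG, hlen⟩ := good_of_spath T hac hsp hl2
      exact ⟨L, hG, by have := base_le h2 hbase; omega⟩
    · -- main step : card ≥ 6
      have hcard6 : 6 ≤ s.card := by omega
      have hq : HQ T s := hinv.resolve_left (by omega)
      have hl3' := hl3 (by omega)
      obtain ⟨v0, v1, v2, t, rfl⟩ : ∃ v0 v1 v2 t, l = v0 :: v1 :: v2 :: t := by
        match l, hl3' with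
        | v0 :: v1 :: v2 :: t, _ => exact ⟨v0, v1, v2, t, rfl⟩
      have hv0 : ∀ w ∈ s, T.Adj v0 w → w = v1 := head_nbr T hac hsp hmax (by simp)
      have hv1 : ∀ w ∈ s, T.Adj v1 w → w = v0 ∨ w = v2 :=
        second_nbr T hac hq hsp hmax (by simp)
      have hv0s : v0 ∈ s := hsp.2.2 v0 (by simp)
      have hv1s : v1 ∈ s := hsp.2.2 v1 (by simp)
      have hv2s : v2 ∈ s := hsp.2.2 v2 (by simp)
      have hnd := hsp.1
      simp only [List.nodup_cons, List.mem_cons, not_or] at hnd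
      have hnd01 : v0 ≠ v1 := fun e => hnd.1.1 e
      have hnd02 : v0 ≠ v2 := fun e => hnd.1.2.1 e
      have hnd12 : v1 ≠ v2 := fun e => hnd.2.1.1 e
      have hadj01 : T.Adj v0 v1 := (List.isChain_cons_cons.mp hsp.2.1).1
      have hadj12 : T.Adj v1 v2 :=
        (List.isChain_cons_cons.mp (List.isChain_cons_cons.mp hsp.2.1).2).1
      set s' := (s.erase v0).erase v1 with hs'
      have hmem' : ∀ x, x ∈ s' ↔ x ∈ s ∧ x ≠ v0 ∧ x ≠ v1 := by
        intro x
        simp only [hs', Finset.mem_erase]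
        tauto
      have hcard' : s'.card = s.card - 2 := by
        rw [hs', Finset.card_erase_of_mem (Finset.mem_erase.mpr ⟨hnd01.symm, hv1s⟩),
          Finset.card_erase_of_mem hv0s]
        omega
      have hconn' : conn T s' := by
        intro a ha b hb
        have has := (hmem' a).mp ha
        have hbs := (hmem' b).mp hb
        obtain ⟨l₀, hsp₀, hh₀, hl₀⟩ := hconn a has.1 b hbs.1
        have hnov0 : v0 ∉ l₀ := by
          intro hmemv
          obtain ⟨y, z, hy, hz, hyz, hxy, hxz⟩ := interior_two T hsp₀.1 hsp₀.2.1 hh₀ hl₀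
            hmemv (fun e => has.2.1 e.symm) (fun e => hbs.2.1 e.symm)
          have h1 := hv0 y (hsp₀.2.2 y hy) hxy
          have h2 := hv0 z (hsp₀.2.2 z hz) hxz
          exact hyz (h1.trans h2.symm)
        have hnov1 : v1 ∉ l₀ := by
          intro hmemv
          obtain ⟨y, z, hy, hz, hyz, hxy, hxz⟩ := interior_two T hsp₀.1 hsp₀.2.1 hh₀ hl₀
            hmemv (fun e => has.2.2 e.symm) (fun e => hbs.2.2 e.symm)
          have h1 := hv1 y (hsp₀.2.2 y hy) hxy
          have h2 := hv1 z (hsp₀.2.2 z hz) hxz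
          rcases h1 with rfl | rfl
          · exact hnov0 hy
          · rcases h2 with rfl | rfl
            · exact hnov0 hz
            · exact hyz rfl
        refine ⟨l₀, ⟨hsp₀.1, hsp₀.2.1, ?_⟩, hh₀, hl₀⟩
        intro x hx
        exact (hmem' x).mpr ⟨hsp₀.2.2 x hx, fun e => hnov0 (e ▸ hx), fun e => hnov1 (e ▸ hx)⟩
      by_cases hHQ' : HQ T s'
      · -- Case A : trim the pendant P2
        obtain ⟨L₁, hG₁, hlen₁⟩ := ih s' (by omega) hconn' (by omega) (Or.inr hHQ')
        rw [hcard'] at hlen₁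
        refine ⟨(v0, v1) :: L₁, ⟨?_, ?_, ?_, ?_⟩, ?_⟩
        · intro p hp
          rcases List.mem_cons.mp hp with rfl | hp'
          · exact ⟨hv0s, hv1s, hadj01⟩
          · obtain ⟨h1, h2, h3⟩ := hG₁.1 p hp'
            exact ⟨((hmem' _).mp h1).1, ((hmem' _).mp h2).1, h3⟩
        · rw [List.map_cons, List.nodup_cons]
          refine ⟨?_, hG₁.2.1⟩
          intro hmemv
          obtain ⟨p, hp, hp1⟩ := List.mem_map.mp hmemv
          exact ((hmem' p.1).mp (hG₁.1 p hp).1).2.1 hp1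
        · rw [List.map_cons, List.nodup_cons]
          refine ⟨?_, hG₁.2.2.1⟩
          intro hmemv
          obtain ⟨p, hp, hp1⟩ := List.mem_map.mp hmemv
          exact ((hmem' p.2).mp (hG₁.1 p hp).2.1).2.2 hp1
        · refine List.pairwise_cons.mpr ⟨?_, hG₁.2.2.2⟩
          intro q hq
          have hq2 := (hmem' q.2).mp (hG₁.1 q hq).2.1
          refine ⟨fun e => hq2.2.1 e.symm, fun hA => hq2.2.2 (hv0 q.2 hq2.1 hA)⟩
        · have := arith1 hcard6
          simp only [List.length_cons]
          omega
      · -- Case B : trim a pendant P3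
        unfold HQ at hHQ'
        push_neg at hHQ'
        obtain ⟨x, hx, aa, haa, bb, hbb, hsaa, hsbb, hxaa, hxbb, habb⟩ := hHQ'
        have hxs : x ∈ s := ((hmem' x).mp hx).1
        have C1 : ∀ y ∈ s', y ≠ v2 → sleaf T s' y → sleaf T s y := by
          intro y hy hyv2 hsl z1 hz1 z2 hz2 a1 a2
          have hy' := (hmem' y).mp hy
          have hz : ∀ z ∈ s, T.Adj y z → z ∈ s' := by
            intro z hzs hAz
            rw [hmem']
            refine ⟨hzs, ?_, ?_⟩
            · rintro rfl
              exact hy'.2.2 (hv0 y hy'.1 hAz.symm)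
            · rintro rfl
              rcases hv1 y hy'.1 hAz.symm with rfl | rfl
              · exact hy'.2.1 rfl
              · exact hyv2 rfl
          exact hsl z1 (hz _ hz1 a1) z2 (hz _ hz2 a2) a1 a2
        have main_b : ∀ p : V, p ∈ s' → sleaf T s' p → sleaf T s' v2 →
            T.Adj x p → T.Adj x v2 → p ≠ v2 →
            ∃ L, Good T s L ∧ gfun s.card ≤ L.length := by
          intro p hp hslp hslv2 hxp hxv2 hpq
          have hps : p ∈ s := ((hmem' p).mp hp).1
          have hslps : sleaf T s p := C1 p hp hpq hslp
          have hv2x : T.Adj v2 x := hxv2.symm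
          have hv2nb : ∀ z ∈ s, T.Adj v2 z → z = v1 ∨ z = x := by
            intro z hz hA
            by_cases e1 : z = v1
            · exact Or.inl e1
            right
            have hzv0 : z ≠ v0 := by
              rintro rfl
              exact hnd12 (hv0 v2 hv2s hA.symm).symm
            exact hslv2 z ((hmem' z).mpr ⟨hz, hzv0, e1⟩) x hx hA hv2x
          set s'' := s'.erase v2 with hs''
          have hmem'' : ∀ y, y ∈ s'' ↔ y ∈ s ∧ y ≠ v0 ∧ y ≠ v1 ∧ y ≠ v2 := by
            intro y
            simp only [hs'', Finset.mem_erase, hmem']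
            tauto
          have hv2s' : v2 ∈ s' := (hmem' v2).mpr ⟨hv2s, hnd02.symm, hnd12.symm⟩
          have hcard'' : s''.card = s.card - 3 := by
            rw [hs'', Finset.card_erase_of_mem hv2s', hcard']
            omega
          have hconn'' : conn T s'' := by
            intro a ha b hb
            obtain ⟨l₀, hsp₀, hh₀, hl₀⟩ := hconn' a (Finset.mem_of_mem_erase ha)
              b (Finset.mem_of_mem_erase hb)
            have hav2 : a ≠ v2 := (Finset.mem_erase.mp ha).1
            have hbv2 : b ≠ v2 := (Finset.mem_erase.mp hb).1
            have hnov2 : v2 ∉ l₀ := by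
              intro hmemv
              obtain ⟨y, z, hy, hz, hyz, hxy, hxz⟩ := interior_two T hsp₀.1 hsp₀.2.1 hh₀ hl₀
                hmemv (fun e => hav2 e.symm) (fun e => hbv2 e.symm)
              have hy' := (hmem' y).mp (hsp₀.2.2 y hy)
              have hz' := (hmem' z).mp (hsp₀.2.2 z hz)
              rcases hv2nb y hy'.1 hxy with rfl | rfl
              · exact hy'.2.2 rfl
              · rcases hv2nb z hz'.1 hxz with rfl | rfl
                · exact hz'.2.2 rfl
                · exact hyz rfl
            refine ⟨l₀, ⟨hsp₀.1, hsp₀.2.1, ?_⟩, hh₀, hl₀⟩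
            intro y hy
            exact Finset.mem_erase.mpr ⟨fun e => hnov2 (e ▸ hy), hsp₀.2.2 y hy⟩
          have hinv'' : s''.card ≤ 3 ∨ HQ T s'' := by
            by_cases hc3 : s''.card ≤ 3
            · exact Or.inl hc3
            right
            have C2 : ∀ y ∈ s'', y ≠ x → sleaf T s'' y → sleaf T s y := by
              intro y hy hyx hsl z1 hz1 z2 hz2 b1 b2
              have hy' := (hmem'' y).mp hy
              have hz : ∀ z ∈ s, T.Adj y z → z ∈ s'' := by
                intro z hzs hAz
                rw [hmem'']
                refine ⟨hzs, ?_, ?_, ?_⟩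
                · rintro rfl
                  exact hy'.2.2.1 (hv0 y hy'.1 hAz.symm)
                · rintro rfl
                  rcases hv1 y hy'.1 hAz.symm with rfl | rfl
                  · exact hy'.2.1 rfl
                  · exact hy'.2.2.2 rfl
                · rintro rfl
                  rcases hv2nb y hy'.1 hAz.symm with rfl | rfl
                  · exact hy'.2.2.1 rfl
                  · exact hyx rfl
              exact hsl z1 (hz _ hz1 b1) z2 (hz _ hz2 b2) b1 b2
            intro x₂ hx₂ a₂ ha₂ b₂ hb₂ hsla₂ hslb₂ hxa₂ hxb₂
            by_contra hne₂
            have hx₂s : x₂ ∈ s := ((hmem'' x₂).mp hx₂).1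
            have hps'' : p ∈ s'' := by
              rw [hmem'']
              have := (hmem' p).mp hp
              exact ⟨this.1, this.2.1, this.2.2, hpq⟩
            have key : ∀ u1, u1 ∈ s'' → sleaf T s'' u1 → sleaf T s'' x →
                T.Adj x₂ u1 → T.Adj x₂ x → u1 ≠ x → False := by
              intro u1 hu1 hslu1 hslu2 hA1 hA2 hneu
              -- x's neighbors in s'' : p and x₂ ; sleaf s'' x forces x₂ = p
              have hx2p : x₂ = p := hslu2 x₂ hx₂ p hps'' hA2.symm hxp
              rw [hx2p] at hA1
              -- p has two s-neighbors x and u1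
              have hu1s : u1 ∈ s := ((hmem'' u1).mp hu1).1
              exact hneu (hslps u1 hu1s x hxs hA1 hxp.symm)
            by_cases ea : a₂ = x
            · subst ea
              exact key b₂ hb₂ hslb₂ hsla₂ hxb₂ hxa₂ (Ne.symm hne₂)
            by_cases eb : b₂ = x
            · subst eb
              exact key a₂ ha₂ hsla₂ hslb₂ hxa₂ hxb₂ hne₂
            · exact hne₂ (hq x₂ hx₂s a₂ ((hmem'' a₂).mp ha₂).1 b₂ ((hmem'' b₂).mp hb₂).1
                (C2 a₂ ha₂ ea hsla₂) (C2 b₂ hb₂ eb hslb₂) hxa₂ hxb₂)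
          obtain ⟨L₂, hG₂, hlen₂⟩ := ih s'' (by omega) hconn'' (by omega) hinv''
          rw [hcard''] at hlen₂
          refine ⟨(v0, v1) :: (v1, v2) :: L₂, ⟨?_, ?_, ?_, ?_⟩, ?_⟩
          · intro pp hpp
            rcases List.mem_cons.mp hpp with rfl | hpp'
            · exact ⟨hv0s, hv1s, hadj01⟩
            rcases List.mem_cons.mp hpp' with rfl | hpp''
            · exact ⟨hv1s, hv2s, hadj12⟩
            · obtain ⟨h1, h2, h3⟩ := hG₂.1 pp hpp''
              exact ⟨((hmem'' _).mp h1).1, ((hmem'' _).mp h2).1, h3⟩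
          · rw [List.map_cons, List.map_cons, List.nodup_cons, List.nodup_cons]
            refine ⟨?_, ?_, hG₂.2.1⟩
            · intro hmemv
              rcases List.mem_cons.mp hmemv with e | hmemv'
              · exact hnd01 e
              obtain ⟨pp, hpp, hpp1⟩ := List.mem_map.mp hmemv'
              exact ((hmem'' pp.1).mp (hG₂.1 pp hpp).1).2.1 hpp1
            · intro hmemv
              obtain ⟨pp, hpp, hpp1⟩ := List.mem_map.mp hmemv
              exact ((hmem'' pp.1).mp (hG₂.1 pp hpp).1).2.2.1 hpp1
          · rw [List.map_cons, List.map_cons, List.nodup_cons, List.nodup_cons]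
            refine ⟨?_, ?_, hG₂.2.2.1⟩
            · intro hmemv
              rcases List.mem_cons.mp hmemv with e | hmemv'
              · exact hnd12 e
              obtain ⟨pp, hpp, hpp1⟩ := List.mem_map.mp hmemv'
              exact ((hmem'' pp.2).mp (hG₂.1 pp hpp).2.1).2.2.1 hpp1
            · intro hmemv
              obtain ⟨pp, hpp, hpp1⟩ := List.mem_map.mp hmemv
              exact ((hmem'' pp.2).mp (hG₂.1 pp hpp).2.1).2.2.2 hpp1
          · refine List.pairwise_cons.mpr ⟨?_, List.pairwise_cons.mpr ⟨?_, hG₂.2.2.2⟩⟩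
            · intro q hq'
              rcases List.mem_cons.mp hq' with rfl | hq''
              · exact ⟨hnd02, fun hA => hnd12 (hv0 v2 hv2s hA).symm⟩
              have hq2 := (hmem'' q.2).mp (hG₂.1 q hq'').2.1
              refine ⟨fun e => hq2.2.1 e.symm, fun hA => hq2.2.2.1 (hv0 q.2 hq2.1 hA)⟩
            · intro q hq'
              have hq2 := (hmem'' q.2).mp (hG₂.1 q hq').2.1
              refine ⟨fun e => hq2.2.2.1 e.symm, ?_⟩
              intro hA
              rcases hv1 q.2 hq2.1 hA with rfl | rfl
              · exact hq2.2.1 rfl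
              · exact hq2.2.2.2 rfl
          · have := arith2 hcard6
            simp only [List.length_cons]
            omega
        by_cases ea : aa = v2
        · subst ea
          exact main_b bb hbb hsbb hsaa hxbb hxaa (Ne.symm habb)
        by_cases eb : bb = v2
        · subst eb
          exact main_b aa haa hsaa hsbb hxaa hxbb habb
        · exact absurd (hq x hxs aa ((hmem' aa).mp haa).1 bb ((hmem' bb).mp hbb).1
            (C1 aa haa ea hsaa) (C1 bb hbb eb hsbb) hxaa hxbb) habb

end TwinFreeAux

open TwinFreeAux

/-- A twin-free simple tree on n ≥ 4 vertices has algebraic co-rank at least ⌈(n+2)/2⌉. -/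
theorem twin_free_tree_corank {n : ℕ} (hn : 4 ≤ n) (T : SimpleGraph (Fin n))
    (hT : T.IsTree)
    (hopen : ∀ u v : Fin n, u ≠ v → T.neighborSet u ≠ T.neighborSet v)
    (hclosed : ∀ u v : Fin n, u ≠ v →
      insert u (T.neighborSet u) ≠ insert v (T.neighborSet v)) :
    let L : Matrix (Fin n) (Fin n) (MvPolynomial (Fin n) ℤ) :=
      Matrix.of fun a b => if a = b then X a else if T.Adj a b then -1 else 0
    (n + 3) / 2 ≤ corank L := by
  intro L
  have hL : ∀ a b, L a b = if a = b then X a else if T.Adj a b then -1 else 0 := fun a b => rfl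
  have hac : T.IsAcyclic := hT.IsAcyclic
  -- connectivity of the full vertex set
  have hconn : conn T (Finset.univ : Finset (Fin n)) := by
    intro u _ v _
    obtain ⟨w⟩ := hT.isConnected.preconnected u v
    refine ⟨w.toPath.1.support,
      ⟨w.toPath.2.support_nodup, w.toPath.1.isChain_adj_support, fun x _ => Finset.mem_univ x⟩,
      ?_, ?_⟩
    · rw [SimpleGraph.Walk.support_eq_cons]
      rfl
    · rw [List.getLast?_eq_getLast w.toPath.1.support_ne_nil,
        SimpleGraph.Walk.getLast_support]
  -- twin-freeness gives HQ
  have hHQ : HQ T (Finset.univ : Finset (Fin n)) := by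
    intro x _ a _ b _ hsa hsb hxa hxb
    by_contra hab
    apply hopen a b hab
    ext z
    simp only [SimpleGraph.mem_neighborSet]
    constructor
    · intro hz
      have := hsa z (Finset.mem_univ z) x (Finset.mem_univ x) hz hxa.symm
      rw [this]
      exact hxb.symm
    · intro hz
      have := hsb z (Finset.mem_univ z) x (Finset.mem_univ x) hz hxb.symm
      rw [this]
      exact hxa.symm
  obtain ⟨L0, hG, hlen⟩ := main T hac n Finset.univ (by simp) hconn
    (by simp only [Finset.card_univ, Fintype.card_fin]; omega) (Or.inr hHQ)
  rw [Finset.card_univ, Fintype.card_fin] at hlen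
  have hgfun : gfun n = (n + 3) / 2 := by unfold gfun; split_ifs <;> omega
  rw [hgfun] at hlen
  set k := (n + 3) / 2 with hk
  set l' := L0.take k with hl'
  have hlenk : l'.length = k := by
    rw [hl', List.length_take]
    omega
  have hmem : ∀ p ∈ l', T.Adj p.1 p.2 := fun p hp =>
    (hG.1 p (List.mem_of_mem_take hp)).2.2
  have hfst : (l'.map Prod.fst).Nodup :=
    hG.2.1.sublist ((List.take_sublist k L0).map Prod.fst)
  have hsnd : (l'.map Prod.snd).Nodup :=
    hG.2.2.1.sublist ((List.take_sublist k L0).map Prod.snd)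
  have hpair : l'.Pairwise (fun p q => p.1 ≠ q.2 ∧ ¬ T.Adj p.1 q.2) :=
    hG.2.2.2.sublist (List.take_sublist k L0)
  have hki : ∀ i : Fin k, (i : ℕ) < l'.length := fun i => by rw [hlenk]; exact i.2
  set r : Fin k → Fin n := fun i => (l'[(i : ℕ)]'(hki i)).1 with hr'
  set cc : Fin k → Fin n := fun i => (l'[(i : ℕ)]'(hki i)).2 with hcc'
  have hrinj : Function.Injective r := by
    intro i j h
    have h2 : (l'.map Prod.fst)[(i : ℕ)]'(by simp [hlenk, i.2]) =
        (l'.map Prod.fst)[(j : ℕ)]'(by simp [hlenk, j.2]) := by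
      simp only [List.getElem_map]
      exact h
    exact Fin.ext (hfst.getElem_inj_iff.mp h2)
  have hcinj : Function.Injective cc := by
    intro i j h
    have h2 : (l'.map Prod.snd)[(i : ℕ)]'(by simp [hlenk, i.2]) =
        (l'.map Prod.snd)[(j : ℕ)]'(by simp [hlenk, j.2]) := by
      simp only [List.getElem_map]
      exact h
    exact Fin.ext (hsnd.getElem_inj_iff.mp h2)
  set M := L.submatrix r cc with hM
  have hdiag : ∀ i, M i i = -1 := by
    intro i
    have hadj : T.Adj (r i) (cc i) := hmem _ (List.getElem_mem _)
    rw [hM, Matrix.submatrix_apply, hL, if_neg hadj.ne, if_pos hadj]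
  have htri : M.BlockTriangular OrderDual.toDual := by
    intro i j hij
    have hlt : (i : ℕ) < (j : ℕ) := hij
    have := (List.pairwise_iff_getElem.mp hpair) (i : ℕ) (j : ℕ) (hki i) (hki j) hlt
    rw [hM, Matrix.submatrix_apply, hL, if_neg this.1, if_neg this.2]
  have hdet : M.det = (-1 : MvPolynomial (Fin n) ℤ) ^ k := by
    rw [Matrix.det_of_lowerTriangular M htri]
    rw [Finset.prod_congr rfl (fun i _ => hdiag i), Finset.prod_const, Finset.card_univ,
      Fintype.card_fin]
  have hktop : minorsIdeal L k = ⊤ := by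
    have hdm : M.det ∈ minorsIdeal L k :=
      Ideal.subset_span ⟨r, cc, hrinj, hcinj, rfl⟩
    rw [Ideal.eq_top_iff_one]
    have h1 : (1 : MvPolynomial (Fin n) ℤ) = (-1) ^ k * M.det := by
      rw [hdet, ← mul_pow]
      norm_num
    rw [h1]
    exact Ideal.mul_mem_left _ _ hdm
  have hbdd : BddAbove {m | minorsIdeal L m = ⊤} := by
    refine ⟨n, fun m hm => ?_⟩
    by_contra hcon
    push_neg at hcon
    have hempty : {d | ∃ rr cc2 : Fin m → Fin n, Function.Injective rr ∧
        Function.Injective cc2 ∧ d = ((L.submatrix rr cc2)).det} = ∅ := by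
      ext d
      simp only [Set.mem_setOf_eq, Set.mem_empty_iff_false, iff_false]
      rintro ⟨rr, cc2, hrr, -, -⟩
      have := Fintype.card_le_of_injective rr hrr
      simp only [Fintype.card_fin] at this
      omega
    rw [Set.mem_setOf_eq, minorsIdeal, hempty, Ideal.span_empty] at hm
    exact bot_ne_top hm
  exact le_csSup hbdd hktop
end

section
/- Let G be a signed multidigraph on n ≥ 2 vertices and v a vertex; write L(G,X) = J(x_v, a; L(G−v,X), b) in block form with first row/column indexed by v. Let d(G,v) be the graph obtained by duplicating v (adding a new vertex v¹ with the same in- and out-neighborhoods as v, and no arcs between v and v¹), so L(d(G,v),X) = J(diag(x_{v¹}, x_v), a; L(G−v,X), b). Then for all 1 ≤ j ≤ n, I_j(d(G,v), X) ⊆ ⟨ x_v, x_{v¹} ⟩ + I_j(G,X)|_{x_v = 0}·P[X], where I_j(G,X)|_{x_v=0} is the image of I_j(G,X) under the substitution x_v ↦ 0. -/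
open Matrix MvPolynomial

/-- Duplication lemma (containment): for G a signed multidigraph on n ≥ 2 vertices with
off-diagonal Laplacian entries `A u w` (no loops) and a vertex v, the j-th critical ideal
of d(G,v) is contained in ⟨x_v, x_{v¹}⟩ + I_j(G,X)|_{x_v = 0}, for 1 ≤ j ≤ n. -/
theorem duplication_critical_ideal_subset {P : Type*} [CommRing P] [IsDomain P]
    [IsPrincipalIdealRing P] {n : ℕ} (hn : 2 ≤ n) (v : Fin n)
    (A : Fin n → Fin n → P) (hA : ∀ u, A u u = 0) :
    let ι := Fin n ⊕ Fin 1
    let R := MvPolynomial ι P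
    let proj : ι → Fin n := Sum.elim id fun _ => v
    let LG : Matrix (Fin n) (Fin n) R :=
      Matrix.of fun u w => if u = w then X (Sum.inl u) else C (A u w)
    let LD : Matrix ι ι R :=
      Matrix.of fun a b => if a = b then X a else C (A (proj a) (proj b))
    let φ : R →+* R :=
      (aeval fun s : ι => if s = Sum.inl v then 0 else (X s : R)).toRingHom
    ∀ j : ℕ, 1 ≤ j → j ≤ n →
      minorsIdeal LD j ≤
        Ideal.span {(X (Sum.inl v) : R), X (Sum.inr 0)} ⊔
          Ideal.map φ (minorsIdeal LG j) := by
  intro ι R proj LG LD φ j hj1 hj2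
  rw [minorsIdeal, Ideal.span_le]
  rintro d ⟨r, c, hr, hc, rfl⟩
  set I : Ideal R := Ideal.span {(X (Sum.inl v) : R), X (Sum.inr 0)} with hIdef
  have hmem1 : (X (Sum.inl v) : R) ∈ I := Ideal.subset_span (Set.mem_insert _ _)
  have hmem2 : (X (Sum.inr 0) : R) ∈ I :=
    Ideal.subset_span (Set.mem_insert_of_mem _ rfl)
  have hφX : ∀ s : ι, φ (X s) = if s = Sum.inl v then 0 else X s := fun s => aeval_X _ s
  have hφC : ∀ p : P, φ (C p) = C p := fun p => by
    show aeval _ (C p) = C p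
    simp [algebraMap_eq]
  -- entrywise difference lies in I
  have hdiff : ∀ a b : ι, LD a b - φ (LG (proj a) (proj b)) ∈ I := by
    rintro (u | k) (w | m)
    · show (if (Sum.inl u : ι) = Sum.inl w then X (Sum.inl u : ι) else C (A u w)) -
        φ (if u = w then X (Sum.inl u) else C (A u w)) ∈ I
      by_cases huw : u = w
      · subst huw
        rw [if_pos rfl, if_pos rfl, hφX]
        by_cases huv : u = v
        · subst huv; rw [if_pos rfl, sub_zero]; exact hmem1
        · rw [if_neg (by simp [huv] : ¬((Sum.inl u : ι) = Sum.inl v)), sub_self]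
          exact I.zero_mem
      · simp [huw, Sum.inl.injEq, hφC, I.zero_mem]
    · -- a = inl u, b = inr m ; proj b = v
      show (if (Sum.inl u : ι) = Sum.inr m then X (Sum.inl u : ι) else C (A u v)) -
        φ (if u = v then X (Sum.inl u) else C (A u v)) ∈ I
      by_cases huv : u = v
      · subst huv; simp [hφX, hA, I.zero_mem]
      · simp [huv, hφC, I.zero_mem]
    · show (if (Sum.inr k : ι) = Sum.inl w then X (Sum.inr k : ι) else C (A v w)) -
        φ (if v = w then X (Sum.inl v) else C (A v w)) ∈ I
      by_cases hvw : v = w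
      · subst hvw; simp [hφX, hA, I.zero_mem]
      · simp [hvw, hφC, I.zero_mem]
    · show (if (Sum.inr k : ι) = Sum.inr m then X (Sum.inr k : ι) else C (A v v)) -
        φ (if v = v then X (Sum.inl v) else C (A v v)) ∈ I
      have : k = m := Subsingleton.elim k m
      subst this
      have : k = (0 : Fin 1) := Subsingleton.elim _ _
      subst this
      simp [hφX, hmem2]
  set r' : Fin j → Fin n := proj ∘ r with hr'def
  set c' : Fin j → Fin n := proj ∘ c with hc'def
  -- determinant congruence mod I
  have hdet : (LD.submatrix r c).det - φ ((LG.submatrix r' c').det) ∈ I := by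
    rw [← Ideal.Quotient.eq]
    have : (Ideal.Quotient.mk I) (φ ((LG.submatrix r' c').det)) =
        (Ideal.Quotient.mk I) (((LG.submatrix r' c').map φ).det) := by
      rw [RingHom.map_det]; simp [RingHom.mapMatrix_apply]
    rw [this, RingHom.map_det, RingHom.map_det]
    congr 1
    ext i j'
    have := hdiff (r i) (c j')
    have h := Ideal.Quotient.eq.mpr this
    simpa [hr'def, hc'def] using h
  have hφdet : φ ((LG.submatrix r' c').det) ∈ Ideal.map φ (minorsIdeal LG j) := by
    by_cases hrinj : Function.Injective r'
    · by_cases hcinj : Function.Injective c'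
      · exact Ideal.mem_map_of_mem φ (Ideal.subset_span ⟨r', c', hrinj, hcinj, rfl⟩)
      · -- two equal columns
        rw [Function.not_injective_iff] at hcinj
        obtain ⟨i1, i2, heq, hne⟩ := hcinj
        have : (LG.submatrix r' c').det = 0 :=
          Matrix.det_zero_of_column_eq hne (fun k => by simp [heq])
        rw [this, map_zero]; exact Ideal.zero_mem _
    · rw [Function.not_injective_iff] at hrinj
      obtain ⟨i1, i2, heq, hne⟩ := hrinj
      have : (LG.submatrix r' c').det = 0 :=
        Matrix.det_zero_of_row_eq hne (by funext k; simp [Matrix.submatrix, heq])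
      rw [this, map_zero]; exact Ideal.zero_mem _
  have : (LD.submatrix r c).det =
      ((LD.submatrix r c).det - φ ((LG.submatrix r' c').det)) +
        φ ((LG.submatrix r' c').det) := by ring
  rw [this]
  exact Ideal.add_mem _ (Ideal.mem_sup_left hdet) (Ideal.mem_sup_right hφdet)
end

section
/- With notation as in the duplication lemma: I_j(d(G,v),X) is the unit ideal if and only if I_j(G,X)|_{x_v=0} is the unit ideal (for 1 ≤ j ≤ n, where n = |V(G)| ≥ 2). -/
open Matrix MvPolynomial

section Aux

variable {P : Type*} [CommRing P] {n : ℕ}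

theorem duplication_aux (v : Fin n) (A : Fin n → Fin n → P) (hA : ∀ u, A u u = 0) (j : ℕ) :
    minorsIdeal (Matrix.of fun a b : Fin n ⊕ Fin 1 =>
      if a = b then X a else
        C (A (Sum.elim id (fun _ => v) a) (Sum.elim id (fun _ => v) b))) j = ⊤ ↔
    Ideal.map ((aeval fun s : Fin n ⊕ Fin 1 =>
        if s = Sum.inl v then 0 else (X s : MvPolynomial (Fin n ⊕ Fin 1) P)).toRingHom)
      (minorsIdeal (Matrix.of fun u w : Fin n =>
        if u = w then (X (Sum.inl u) : MvPolynomial (Fin n ⊕ Fin 1) P) else C (A u w)) j) = ⊤ := by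
  set R := MvPolynomial (Fin n ⊕ Fin 1) P
  set proj : Fin n ⊕ Fin 1 → Fin n := Sum.elim id (fun _ => v) with hproj
  set LG : Matrix (Fin n) (Fin n) R :=
    Matrix.of fun u w => if u = w then X (Sum.inl u) else C (A u w) with hLG
  set LD : Matrix (Fin n ⊕ Fin 1) (Fin n ⊕ Fin 1) R :=
    Matrix.of fun a b => if a = b then X a else C (A (proj a) (proj b)) with hLD
  set φ : R →+* R :=
    (aeval fun s : Fin n ⊕ Fin 1 => if s = Sum.inl v then 0 else (X s : R)).toRingHom with hφ
  set ψ : R →+* R :=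
    (aeval fun s : Fin n ⊕ Fin 1 =>
      Sum.elim (fun u => if u = v then 0 else (X (Sum.inl u) : R)) (fun _ => 0) s).toRingHom
      with hψ
  have φX : ∀ s, φ (X s) = if s = Sum.inl v then 0 else X s := fun s => aeval_X _ s
  have φC : ∀ p : P, φ (C p) = C p := fun p => by
    rw [show φ (C p) = aeval (fun s : Fin n ⊕ Fin 1 =>
      if s = Sum.inl v then 0 else (X s : R)) (C p) from rfl, aeval_C, algebraMap_eq]
  have ψXl : ∀ u : Fin n, ψ (X (Sum.inl u)) = if u = v then 0 else X (Sum.inl u) :=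
    fun u => (aeval_X _ (Sum.inl u)).trans (by rw [Sum.elim_inl])
  have ψXr : ∀ x : Fin 1, ψ (X (Sum.inr x)) = 0 :=
    fun x => (aeval_X _ (Sum.inr x)).trans (by rw [Sum.elim_inr])
  have ψC : ∀ p : P, ψ (C p) = C p := fun p => by
    rw [show ψ (C p) = aeval (fun s : Fin n ⊕ Fin 1 =>
      Sum.elim (fun u => if u = v then 0 else (X (Sum.inl u) : R)) (fun _ => 0) s) (C p)
      from rfl, aeval_C, algebraMap_eq]
  -- key matrix identity for the forward direction
  have hM1 : LD.map ψ = (LG.map φ).submatrix proj proj := by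
    refine Matrix.ext fun a b => ?_
    show ψ (if a = b then X a else C (A (proj a) (proj b))) =
      φ (if proj a = proj b then X (Sum.inl (proj a)) else C (A (proj a) (proj b)))
    rcases a with u | x
    · rcases b with w | y
      · simp only [hproj, Sum.elim_inl, id_eq]
        by_cases huw : u = w
        · subst huw
          rw [if_pos rfl, if_pos rfl, ψXl, φX]
          by_cases huv : u = v
          · rw [if_pos huv, if_pos (by rw [huv])]
          · rw [if_neg huv, if_neg (fun hh => huv (Sum.inl.inj hh))]
        · rw [if_neg (fun hh => huw (Sum.inl.inj hh)), if_neg huw, ψC, φC]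
      · simp only [hproj, Sum.elim_inl, Sum.elim_inr, id_eq]
        rw [if_neg (by simp)]
        by_cases huv : u = v
        · subst huv
          rw [if_pos rfl, φX, if_pos rfl, ψC, hA, map_zero]
        · rw [if_neg huv, ψC, φC]
    · rcases b with w | y
      · simp only [hproj, Sum.elim_inl, Sum.elim_inr, id_eq]
        rw [if_neg (by simp)]
        by_cases hvw : v = w
        · subst hvw
          rw [if_pos rfl, φX, if_pos rfl, ψC, hA, map_zero]
        · rw [if_neg hvw, ψC, φC]
      · have hxy : x = y := Subsingleton.elim x y
        subst hxy
        rw [if_pos rfl, if_pos rfl, ψXr, φX,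
          if_pos (show (Sum.inl (proj (Sum.inr x)) : Fin n ⊕ Fin 1) = Sum.inl v from rfl)]
  -- key matrix identity for the reverse direction
  have hM2 : ∀ (k : ℕ) (r c : Fin k → Fin n),
      (LG.map φ).submatrix r c =
        LD.submatrix (fun i => if r i = v then Sum.inr 0 else Sum.inl (r i))
          (fun i => Sum.inl (c i)) := by
    intro k r c
    refine Matrix.ext fun i k' => ?_
    show φ (if r i = c k' then X (Sum.inl (r i)) else C (A (r i) (c k'))) =
      (if (if r i = v then (Sum.inr 0 : Fin n ⊕ Fin 1) else Sum.inl (r i)) = Sum.inl (c k')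
        then X (if r i = v then (Sum.inr 0 : Fin n ⊕ Fin 1) else Sum.inl (r i))
        else C (A (proj (if r i = v then (Sum.inr 0 : Fin n ⊕ Fin 1) else Sum.inl (r i)))
          (proj (Sum.inl (c k')))))
    by_cases hri : r i = v
    · rw [if_pos hri, if_neg (by simp : (Sum.inr 0 : Fin n ⊕ Fin 1) ≠ Sum.inl (c k'))]
      simp only [hproj, Sum.elim_inl, Sum.elim_inr, id_eq]
      by_cases h2 : r i = c k'
      · rw [if_pos h2, φX, if_pos (by rw [hri]), ← h2, hri, hA v, map_zero]
      · rw [if_neg h2, φC, hri]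
    · rw [if_neg hri]
      by_cases h2 : r i = c k'
      · rw [if_pos h2, if_pos (congrArg Sum.inl h2), φX,
          if_neg (fun hh => hri (Sum.inl.inj hh))]
      · rw [if_neg h2, if_neg (fun hh => h2 (Sum.inl.inj hh)), φC]
        simp only [hproj, Sum.elim_inl, id_eq]
  constructor
  · -- forward
    intro h
    rw [← top_le_iff]
    have key : Ideal.map ψ (minorsIdeal LD j) ≤ Ideal.map φ (minorsIdeal LG j) := by
      rw [minorsIdeal, Ideal.map_span, Ideal.span_le]
      rintro _ ⟨d, ⟨r, c, hr, hc, rfl⟩, rfl⟩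
      have hdet : ψ ((LD.submatrix r c).det) =
          ((LG.map φ).submatrix (proj ∘ r) (proj ∘ c)).det := by
        rw [RingHom.map_det]
        congr 1
        rw [RingHom.mapMatrix_apply, ← Matrix.submatrix_map, hM1, Matrix.submatrix_submatrix]
      rw [hdet]
      by_cases hrinj : Function.Injective (proj ∘ r)
      · by_cases hcinj : Function.Injective (proj ∘ c)
        · have : ((LG.map φ).submatrix (proj ∘ r) (proj ∘ c)).det =
              φ ((LG.submatrix (proj ∘ r) (proj ∘ c)).det) := by
            rw [RingHom.map_det, RingHom.mapMatrix_apply, ← Matrix.submatrix_map]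
          rw [this]
          exact Ideal.mem_map_of_mem φ
            (Ideal.subset_span ⟨proj ∘ r, proj ∘ c, hrinj, hcinj, rfl⟩)
        · obtain ⟨a, b, hab, hne⟩ : ∃ a b, proj (c a) = proj (c b) ∧ a ≠ b := by
            simp only [Function.Injective, not_forall] at hcinj
            obtain ⟨a, b, hab, hne⟩ := hcinj
            exact ⟨a, b, hab, hne⟩
          rw [Matrix.det_zero_of_column_eq hne (fun k => by
            simp only [Matrix.submatrix_apply, Function.comp_apply, hab])]
          exact Submodule.zero_mem _
      · obtain ⟨a, b, hab, hne⟩ : ∃ a b, proj (r a) = proj (r b) ∧ a ≠ b := by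
          simp only [Function.Injective, not_forall] at hrinj
          obtain ⟨a, b, hab, hne⟩ := hrinj
          exact ⟨a, b, hab, hne⟩
        rw [Matrix.det_zero_of_row_eq hne (by
          funext k
          simp only [Matrix.submatrix_apply, Function.comp_apply, hab])]
        exact Submodule.zero_mem _
    calc (⊤ : Ideal R) = Ideal.map ψ (minorsIdeal LD j) := by rw [h, Ideal.map_top]
      _ ≤ Ideal.map φ (minorsIdeal LG j) := key
  · -- reverse
    intro h
    rw [← top_le_iff, ← h]
    rw [minorsIdeal, Ideal.map_span, Ideal.span_le]
    rintro _ ⟨d, ⟨r, c, hr, hc, rfl⟩, rfl⟩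
    refine Ideal.subset_span
      ⟨fun i => if r i = v then Sum.inr 0 else Sum.inl (r i), fun i => Sum.inl (c i),
        ?_, ?_, ?_⟩
    · intro a b hab
      replace hab : (if r a = v then (Sum.inr 0 : Fin n ⊕ Fin 1) else Sum.inl (r a)) =
          (if r b = v then (Sum.inr 0 : Fin n ⊕ Fin 1) else Sum.inl (r b)) := hab
      by_cases ha : r a = v
      · by_cases hb : r b = v
        · exact hr (ha.trans hb.symm)
        · rw [if_pos ha, if_neg hb] at hab
          exact absurd hab (by simp)
      · by_cases hb : r b = v
        · rw [if_neg ha, if_pos hb] at hab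
          exact absurd hab (by simp)
        · rw [if_neg ha, if_neg hb] at hab
          exact hr (Sum.inl.inj hab)
    · intro a b hab
      exact hc (Sum.inl.inj hab)
    · rw [RingHom.map_det, RingHom.mapMatrix_apply, ← Matrix.submatrix_map, hM2 j r c]

end Aux

/-- Duplication lemma (triviality): for G a signed multidigraph on n ≥ 2 vertices
and a vertex v, the j-th critical ideal of d(G,v) is the unit ideal if and only if
I_j(G,X)|_{x_v = 0} is the unit ideal, for 1 ≤ j ≤ n. -/
theorem duplication_critical_ideal_trivial_iff {P : Type*} [CommRing P] [IsDomain P]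
    [IsPrincipalIdealRing P] {n : ℕ} (hn : 2 ≤ n) (v : Fin n)
    (A : Fin n → Fin n → P) (hA : ∀ u, A u u = 0) :
    let ι := Fin n ⊕ Fin 1
    let R := MvPolynomial ι P
    let proj : ι → Fin n := Sum.elim id fun _ => v
    let LG : Matrix (Fin n) (Fin n) R :=
      Matrix.of fun u w => if u = w then X (Sum.inl u) else C (A u w)
    let LD : Matrix ι ι R :=
      Matrix.of fun a b => if a = b then X a else C (A (proj a) (proj b))
    let φ : R →+* R :=
      (aeval fun s : ι => if s = Sum.inl v then 0 else (X s : R)).toRingHom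
    ∀ j : ℕ, 1 ≤ j → j ≤ n →
      (minorsIdeal LD j = ⊤ ↔ Ideal.map φ (minorsIdeal LG j) = ⊤) := by
  intro ι R proj LG LD φ j hj1 hj2
  exact duplication_aux v A hA j
end

section
/- Let G be a signed multidigraph on n ≥ 2 vertices and v a vertex; let r(G,v) be the replication of v (add vertex v¹ with the same neighborhoods as v together with arcs vv¹ and v¹v of sign +1, giving off-diagonal entries −1 between v and v¹ in the Laplacian). Then for all 1 ≤ j ≤ n: I_j(r(G,v),X) ⊆ ⟨ x_v + 1, x_{v¹} + 1 ⟩ + I_j(G,X)|_{x_v = −1}·P[X], and I_j(r(G,v),X) is the unit ideal if and only if I_j(G,X)|_{x_v=−1} is the unit ideal. -/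
open Matrix MvPolynomial

section Aux

variable {P : Type*} [CommRing P] {n : ℕ}

noncomputable def sigmaH (v : Fin n) :
    MvPolynomial (Fin n ⊕ Fin 1) P →+* MvPolynomial (Fin n ⊕ Fin 1) P :=
  (aeval fun s : Fin n ⊕ Fin 1 =>
    if s = Sum.inl v then -1 else if s = Sum.inr 0 then -1 else X s).toRingHom

noncomputable def psiH (v : Fin n) :
    MvPolynomial (Fin n ⊕ Fin 1) P →+* MvPolynomial (Fin n ⊕ Fin 1) P :=
  (aeval fun s : Fin n ⊕ Fin 1 =>
    if s = Sum.inl v then -1 else (X s : MvPolynomial (Fin n ⊕ Fin 1) P)).toRingHom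

def projH (v : Fin n) : Fin n ⊕ Fin 1 → Fin n := Sum.elim id fun _ => v

noncomputable def LGH (A : Fin n → Fin n → P) :
    Matrix (Fin n) (Fin n) (MvPolynomial (Fin n ⊕ Fin 1) P) :=
  Matrix.of fun u w => if u = w then X (Sum.inl u) else C (A u w)

noncomputable def LRH (v : Fin n) (A : Fin n → Fin n → P) :
    Matrix (Fin n ⊕ Fin 1) (Fin n ⊕ Fin 1) (MvPolynomial (Fin n ⊕ Fin 1) P) :=
  Matrix.of fun a b =>
    if a = b then X a
    else if projH v a = projH v b then -1 else C (A (projH v a) (projH v b))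

lemma sub_sigmaH_mem (v : Fin n) (f : MvPolynomial (Fin n ⊕ Fin 1) P) :
    f - sigmaH v f ∈
      Ideal.span {(X (Sum.inl v) + 1 : MvPolynomial (Fin n ⊕ Fin 1) P),
        X (Sum.inr 0) + 1} := by
  induction f using MvPolynomial.induction_on with
  | C a => simp [sigmaH]
  | add p q hp hq =>
      have : p + q - sigmaH v (p + q) = (p - sigmaH v p) + (q - sigmaH v q) := by
        rw [map_add]; ring
      rw [this]; exact Ideal.add_mem _ hp hq
  | mul_X p s hp =>
      have hX : X s - sigmaH v (X s) ∈
          Ideal.span {(X (Sum.inl v) + 1 : MvPolynomial (Fin n ⊕ Fin 1) P),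
            X (Sum.inr 0) + 1} := by
        by_cases h1 : s = Sum.inl v
        · subst h1
          have : sigmaH (P := P) v (X (Sum.inl v)) = -1 := by simp [sigmaH]
          rw [this, sub_neg_eq_add]
          exact Ideal.subset_span (Set.mem_insert _ _)
        · by_cases h2 : s = Sum.inr 0
          · subst h2
            have : sigmaH (P := P) v (X (Sum.inr 0)) = -1 := by simp [sigmaH]
            rw [this, sub_neg_eq_add]
            exact Ideal.subset_span (Set.mem_insert_of_mem _ rfl)
          · have : sigmaH (P := P) v (X s) = X s := by simp [sigmaH, h1, h2]
            rw [this, sub_self]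
            exact Ideal.zero_mem _
      have : p * X s - sigmaH v (p * X s)
          = (p - sigmaH v p) * X s + sigmaH v p * (X s - sigmaH v (X s)) := by
        rw [_root_.map_mul]; ring
      rw [this]
      exact Ideal.add_mem _ (Ideal.mul_mem_right _ _ hp) (Ideal.mul_mem_left _ _ hX)

lemma map_sigma_LR (v : Fin n) (A : Fin n → Fin n → P) :
    (LRH v A).map (sigmaH v) = ((LGH A).map (psiH v)).submatrix (projH v) (projH v) := by
  ext a b
  rcases a with u | x
  · rcases b with w | y
    · by_cases huw : u = w
      · subst huw
        by_cases huv : u = v <;> simp [LRH, LGH, projH, sigmaH, psiH, huv]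
      · simp [LRH, LGH, projH, sigmaH, psiH, huw]
    · obtain rfl : y = 0 := Subsingleton.elim y 0
      by_cases huv : u = v <;> simp [LRH, LGH, projH, sigmaH, psiH, huv]
  · obtain rfl : x = 0 := Subsingleton.elim x 0
    rcases b with w | y
    · by_cases hvw : v = w <;> simp [LRH, LGH, projH, sigmaH, psiH, hvw]
    · obtain rfl : y = 0 := Subsingleton.elim y 0
      simp [LRH, LGH, projH, sigmaH, psiH]

lemma psi_submatrix_eq {j : ℕ} (v : Fin n) (A : Fin n → Fin n → P) (r c : Fin j → Fin n) :
    ((LGH A).map (psiH v)).submatrix r c =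
      (LRH v A).submatrix (fun i => if r i = v then Sum.inr 0 else Sum.inl (r i))
        (fun k => Sum.inl (c k)) := by
  ext i k
  by_cases hri : r i = v
  · by_cases hck : c k = v <;>
      simp [LGH, LRH, projH, psiH, hri, hck, Ne.symm]
  · by_cases hrc : r i = c k
    · simp [LGH, LRH, projH, psiH, ← hrc, hri]
    · simp [LGH, LRH, projH, psiH, hri, hrc]

lemma rprime_inj {j : ℕ} (v : Fin n) {r : Fin j → Fin n} (hr : Function.Injective r) :
    Function.Injective fun i =>
      if r i = v then (Sum.inr 0 : Fin n ⊕ Fin 1) else Sum.inl (r i) := by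
  intro i i' h
  by_cases h1 : r i = v <;> by_cases h2 : r i' = v <;> simp [h1, h2] at h
  · exact hr (h1.trans h2.symm)
  · exact hr h

lemma map_comp_eq (v : Fin n) (A : Fin n → Fin n → P) :
    (LGH A).map ((sigmaH v).comp (psiH v)) = (LGH A).map (psiH v) := by
  ext u w
  by_cases huw : u = w
  · subst huw
    by_cases huv : u = v <;> simp [LGH, sigmaH, psiH, huv]
  · simp [LGH, sigmaH, psiH, huw]

end Aux

theorem aux_main {P : Type*} [CommRing P] {n : ℕ} (v : Fin n) (A : Fin n → Fin n → P)
    (j : ℕ) :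
    minorsIdeal (LRH v A) j ≤
        Ideal.span {(X (Sum.inl v) + 1 : MvPolynomial (Fin n ⊕ Fin 1) P),
          X (Sum.inr 0) + 1} ⊔ Ideal.map (psiH v) (minorsIdeal (LGH A) j) ∧
      (minorsIdeal (LRH v A) j = ⊤ ↔ Ideal.map (psiH v) (minorsIdeal (LGH A) j) = ⊤) := by
  set T : Ideal (MvPolynomial (Fin n ⊕ Fin 1) P) :=
    Ideal.span {(X (Sum.inl v) + 1 : MvPolynomial (Fin n ⊕ Fin 1) P), X (Sum.inr 0) + 1}
    with hT
  -- ψ-image of minors of LG are minors of LR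
  have hMI_le : Ideal.map (psiH v) (minorsIdeal (LGH A) j) ≤ minorsIdeal (LRH v A) j := by
    rw [minorsIdeal, Ideal.map_span, Ideal.span_le]
    rintro _ ⟨d, ⟨r, c, hr, hc, rfl⟩, rfl⟩
    apply Ideal.subset_span
    refine ⟨(fun i => if r i = v then Sum.inr 0 else Sum.inl (r i)), fun k => Sum.inl (c k),
      rprime_inj v hr, fun k k' h => hc (Sum.inl.inj h), ?_⟩
    rw [RingHom.map_det, RingHom.mapMatrix_apply, ← Matrix.submatrix_map, psi_submatrix_eq]
  -- inclusion
  have hle : minorsIdeal (LRH v A) j ≤ T ⊔ Ideal.map (psiH v) (minorsIdeal (LGH A) j) := by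
    rw [minorsIdeal, Ideal.span_le]
    rintro _ ⟨r, c, hr, hc, rfl⟩
    have hdecomp : ((LRH v A).submatrix r c).det
        = (((LRH v A).submatrix r c).det - sigmaH v (((LRH v A).submatrix r c).det))
          + sigmaH v (((LRH v A).submatrix r c).det) := by ring
    rw [hdecomp]
    refine Ideal.add_mem _ (Ideal.mem_sup_left (sub_sigmaH_mem v _)) (Ideal.mem_sup_right ?_)
    have hσ : sigmaH v (((LRH v A).submatrix r c).det)
        = (((LGH A).map (psiH v)).submatrix (projH v ∘ r) (projH v ∘ c)).det := by
      rw [RingHom.map_det, RingHom.mapMatrix_apply, ← Matrix.submatrix_map, map_sigma_LR, Matrix.submatrix_submatrix]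
    rw [hσ]
    by_cases hinr : Function.Injective (projH v ∘ r)
    · by_cases hinc : Function.Injective (projH v ∘ c)
      · have heq : (((LGH A).map (psiH v)).submatrix (projH v ∘ r) (projH v ∘ c)).det
            = psiH v (((LGH A).submatrix (projH v ∘ r) (projH v ∘ c)).det) := by
          rw [RingHom.map_det, RingHom.mapMatrix_apply, ← Matrix.submatrix_map]
        rw [heq]
        exact Ideal.mem_map_of_mem _ (Ideal.subset_span ⟨_, _, hinr, hinc, rfl⟩)
      · rw [Function.not_injective_iff] at hinc
        obtain ⟨k, k', hkk', hne⟩ := hinc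
        rw [Matrix.det_zero_of_column_eq hne
          (fun a => by rw [Matrix.submatrix_apply, Matrix.submatrix_apply, hkk'])]
        exact Ideal.zero_mem _
    · rw [Function.not_injective_iff] at hinr
      obtain ⟨i, i', hii', hne⟩ := hinr
      rw [Matrix.det_zero_of_row_eq hne
        (funext fun b => by rw [Matrix.submatrix_apply, Matrix.submatrix_apply, hii'])]
      exact Ideal.zero_mem _
  -- σ fixes the image ideal
  have hσψ : Ideal.map (sigmaH v) (Ideal.map (psiH v) (minorsIdeal (LGH A) j))
      = Ideal.map (psiH v) (minorsIdeal (LGH A) j) := by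
    rw [Ideal.map_map, minorsIdeal, Ideal.map_span, Ideal.map_span]
    congr 1
    apply Set.image_congr
    rintro _ ⟨r, c, hr, hc, rfl⟩
    show ((sigmaH v).comp (psiH v)) _ = psiH v _
    rw [RingHom.map_det, RingHom.mapMatrix_apply, RingHom.map_det, RingHom.mapMatrix_apply, ← Matrix.submatrix_map, ← Matrix.submatrix_map,
      map_comp_eq]
  refine ⟨hle, ?_, fun hI => ?_⟩
  · intro hJ
    have h1 : (1 : MvPolynomial (Fin n ⊕ Fin 1) P)
        ∈ T ⊔ Ideal.map (psiH v) (minorsIdeal (LGH A) j) :=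
      hle (by rw [hJ]; exact Submodule.mem_top)
    have h2 : (1 : MvPolynomial (Fin n ⊕ Fin 1) P)
        ∈ Ideal.map (sigmaH v) (T ⊔ Ideal.map (psiH v) (minorsIdeal (LGH A) j)) := by
      simpa using Ideal.mem_map_of_mem (sigmaH v) h1
    have hTbot : Ideal.map (sigmaH v) T = ⊥ := by
      rw [hT, Ideal.map_span]
      have e1 : sigmaH (P := P) v (X (Sum.inl v) + 1) = 0 := by simp [sigmaH]
      have e2 : sigmaH (P := P) v (X (Sum.inr 0) + 1) = 0 := by simp [sigmaH]
      rw [Set.image_pair, e1, e2]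
      simp
    rw [Ideal.map_sup, hσψ, hTbot, bot_sup_eq] at h2
    exact (Ideal.eq_top_iff_one _).mpr h2
  · rw [eq_top_iff, ← hI]
    exact hMI_le


/-- Replication lemma: for G a signed multidigraph on n ≥ 2 vertices and a vertex v,
I_j(r(G,v),X) ⊆ ⟨x_v + 1, x_{v¹} + 1⟩ + I_j(G,X)|_{x_v = −1}, and I_j(r(G,v),X) is
the unit ideal iff I_j(G,X)|_{x_v = −1} is, for 1 ≤ j ≤ n. -/
theorem replication_critical_ideal {P : Type*} [CommRing P] [IsDomain P]
    [IsPrincipalIdealRing P] {n : ℕ} (hn : 2 ≤ n) (v : Fin n)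
    (A : Fin n → Fin n → P) (hA : ∀ u, A u u = 0) :
    let ι := Fin n ⊕ Fin 1
    let R := MvPolynomial ι P
    let proj : ι → Fin n := Sum.elim id fun _ => v
    let LG : Matrix (Fin n) (Fin n) R :=
      Matrix.of fun u w => if u = w then X (Sum.inl u) else C (A u w)
    let LR : Matrix ι ι R :=
      Matrix.of fun a b =>
        if a = b then X a
        else if proj a = proj b then -1 else C (A (proj a) (proj b))
    let ψ : R →+* R :=
      (aeval fun s : ι => if s = Sum.inl v then -1 else (X s : R)).toRingHom
    ∀ j : ℕ, 1 ≤ j → j ≤ n →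
      minorsIdeal LR j ≤
          Ideal.span {(X (Sum.inl v) + 1 : R), X (Sum.inr 0) + 1} ⊔
            Ideal.map ψ (minorsIdeal LG j) ∧
        (minorsIdeal LR j = ⊤ ↔ Ideal.map ψ (minorsIdeal LG j) = ⊤) := by
  intro ι R proj LG LR ψ j hj1 hjn
  exact aux_main v A j
end

section
/- Let G be a signed multidigraph on n vertices and d ∈ ℤ^n. Let G^d be obtained from G by duplicating vertex v exactly d_v times when d_v > 0 and replicating v exactly −d_v times when d_v < 0. Then γ(G^d) = γ(G^{supp(d)}), where supp(d)_v = sign(d_v) ∈ {−1,0,1}; in particular γ(G^d) ≤ n for all d ∈ ℤ^n. -/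
open Matrix MvPolynomial

/-- The generalized Laplacian of `G^d`: the graph obtained from a signed multidigraph G
(off-diagonal Laplacian entries `A u w`) by duplicating vertex u `d u` times if `d u > 0`
and replicating it `−d u` times if `d u < 0`. Vertices are pairs `⟨u, i⟩` with i ranging
over the |d u| + 1 copies of u; copies of u are mutually adjacent (entry −1) exactly when
`d u < 0`, and entries between copies of distinct vertices u ≠ w are `A u w`. -/
noncomputable def twinLap {P : Type*} [CommRing P] {n : ℕ} (A : Fin n → Fin n → P)
    (d : Fin n → ℤ) :
    Matrix (Σ u : Fin n, Fin ((d u).natAbs + 1)) (Σ u : Fin n, Fin ((d u).natAbs + 1))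
      (MvPolynomial (Σ u : Fin n, Fin ((d u).natAbs + 1)) P) :=
  Matrix.of fun a b =>
    if a = b then X a
    else if a.1 = b.1 then (if d a.1 < 0 then -1 else 0) else C (A a.1 b.1)

section Aux
variable {P : Type*} [CommRing P] {n : ℕ}

noncomputable def baseLap (A : Fin n → Fin n → P) (d : Fin n → ℤ) :
    Matrix (Fin n) (Fin n) (MvPolynomial (Fin n) P) :=
  Matrix.of fun u w => if u = w then
      (if d u < 0 then -1 else if 0 < d u then 0 else X u)
    else C (A u w)

lemma span_top_trans {R S : Type*} [CommRing R] [CommRing S] (f : R →+* S)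
    (s : Set R) (J : Ideal S) (h : ∀ x ∈ s, f x ∈ J) (hs : Ideal.span s = ⊤) : J = ⊤ := by
  rw [Ideal.eq_top_iff_one]
  have h1 : (1 : R) ∈ Ideal.span s := by rw [hs]; trivial
  have h2 : f 1 ∈ Ideal.map f (Ideal.span s) := Ideal.mem_map_of_mem f h1
  rw [Ideal.map_span] at h2
  have hle : Ideal.span (f '' s) ≤ J :=
    Ideal.span_le.mpr (by rintro _ ⟨x, hx, rfl⟩; exact h x hx)
  simpa using hle h2

/-- substitution hom -/
noncomputable def subst (d : Fin n → ℤ) :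
    MvPolynomial (Σ u : Fin n, Fin ((d u).natAbs + 1)) P →+* MvPolynomial (Fin n) P :=
  (aeval (R := P) fun a : Σ u : Fin n, Fin ((d u).natAbs + 1) =>
    if d a.1 < 0 then -1 else if 0 < d a.1 then 0 else X a.1).toRingHom

lemma subst_twin (A : Fin n → Fin n → P) (d : Fin n → ℤ)
    (a b : Σ u : Fin n, Fin ((d u).natAbs + 1)) :
    subst d (twinLap A d a b) = baseLap A d a.1 b.1 := by
  obtain ⟨ua, ia⟩ := a
  obtain ⟨ub, ib⟩ := b
  simp only [twinLap, baseLap, Matrix.of_apply, subst, AlgHom.toRingHom_eq_coe,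
    RingHom.coe_coe]
  by_cases h1 : ua = ub
  · subst h1
    by_cases hib : ia = ib
    · subst hib
      simp
    · have hab : (⟨ua, ia⟩ : Σ u : Fin n, Fin ((d u).natAbs + 1)) ≠ ⟨ua, ib⟩ := by
        simp [hib]
      have hd : d ua ≠ 0 := by
        intro h0
        have : Subsingleton (Fin ((d ua).natAbs + 1)) := by
          rw [h0]; exact Fin.subsingleton_one
        exact hib (Subsingleton.elim _ _)
      rw [if_neg hab, if_pos rfl, if_pos rfl]
      by_cases h2 : d ua < 0
      · simp [h2]
      · have h3 : 0 < d ua := by omega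
        simp [h2, h3]
  · have hab : (⟨ua, ia⟩ : Σ u : Fin n, Fin ((d u).natAbs + 1)) ≠ ⟨ub, ib⟩ := by
      intro h; exact h1 (congrArg Sigma.fst h)
    rw [if_neg hab, if_neg h1, if_neg h1]
    simp

end Aux

section Aux2
variable {P : Type*} [CommRing P] {n : ℕ}

noncomputable def liftV (d : Fin n → ℤ) (u : Fin n) : Σ u : Fin n, Fin ((d u).natAbs + 1) :=
  if h : d u = 0 then ⟨u, 0⟩ else ⟨u, ⟨1, by have := Int.natAbs_pos.mpr h; omega⟩⟩

lemma liftV_fst (d : Fin n → ℤ) (u : Fin n) : (liftV d u).1 = u := by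
  unfold liftV; split_ifs <;> rfl

noncomputable def incl (d : Fin n → ℤ) :
    MvPolynomial (Fin n) P →+* MvPolynomial (Σ u : Fin n, Fin ((d u).natAbs + 1)) P :=
  (aeval (R := P) fun u : Fin n => X (⟨u, 0⟩ : Σ u : Fin n, Fin ((d u).natAbs + 1))).toRingHom

lemma incl_base (A : Fin n → Fin n → P) (d : Fin n → ℤ) (u w : Fin n) :
    incl d (baseLap A d u w) = twinLap A d (liftV d u) ⟨w, 0⟩ := by
  simp only [baseLap, twinLap, Matrix.of_apply, incl, AlgHom.toRingHom_eq_coe, RingHom.coe_coe]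
  by_cases h : u = w
  · subst h
    by_cases h0 : d u = 0
    · rw [if_pos rfl]
      rw [liftV, dif_pos h0]
      simp [h0]
    · rw [liftV, dif_neg h0]
      have hne : (⟨u, ⟨1, by have := Int.natAbs_pos.mpr h0; omega⟩⟩ :
          Σ u : Fin n, Fin ((d u).natAbs + 1)) ≠ ⟨u, 0⟩ := by
        simp [Fin.ext_iff]
      rw [if_pos rfl, if_neg hne, if_pos rfl]
      by_cases h2 : d u < 0
      · simp [h2]
      · have h3 : 0 < d u := by omega
        simp [h2, h3]
  · have hne : liftV d u ≠ (⟨w, 0⟩ : Σ u : Fin n, Fin ((d u).natAbs + 1)) := by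
      intro he
      exact h (by rw [← liftV_fst d u, he])
    have hfst : (liftV d u).1 ≠ (⟨w, (0 : Fin ((d w).natAbs + 1))⟩ :
        Σ u : Fin n, Fin ((d u).natAbs + 1)).1 := by
      rw [liftV_fst]; exact h
    rw [if_neg h, if_neg hne, if_neg hfst]
    simp [liftV_fst]

lemma twin_iff (A : Fin n → Fin n → P) (d : Fin n → ℤ) (k : ℕ) :
    minorsIdeal (twinLap A d) k = ⊤ ↔ minorsIdeal (baseLap A d) k = ⊤ := by
  constructor
  · intro h
    refine span_top_trans (subst d) _ _ ?_ h
    rintro x ⟨r, c, hr, hc, rfl⟩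
    have hdet : subst d ((twinLap A d).submatrix r c).det
        = ((baseLap A d).submatrix (fun p => (r p).1) (fun p => (c p).1)).det := by
      rw [RingHom.map_det]
      congr 1
      ext p q
      simp [Matrix.submatrix_apply, subst_twin]
    rw [hdet]
    by_cases hri : Function.Injective fun p => (r p).1
    · by_cases hci : Function.Injective fun p => (c p).1
      · exact Ideal.subset_span ⟨_, _, hri, hci, rfl⟩
      · simp only [Function.Injective, not_forall] at hci
        obtain ⟨p, q, hpq, hne⟩ := hci
        rw [Matrix.det_zero_of_column_eq hne (by intro j; simp [hpq])]
        exact Ideal.zero_mem _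
    · simp only [Function.Injective, not_forall] at hri
      obtain ⟨p, q, hpq, hne⟩ := hri
      rw [Matrix.det_zero_of_row_eq hne (by funext j; simp [hpq])]
      exact Ideal.zero_mem _
  · intro h
    refine span_top_trans (incl d) _ _ ?_ h
    rintro x ⟨r, c, hr, hc, rfl⟩
    have hdet : incl d ((baseLap A d).submatrix r c).det
        = ((twinLap A d).submatrix (fun p => liftV d (r p))
            (fun p => (⟨c p, 0⟩ : Σ u : Fin n, Fin ((d u).natAbs + 1)))).det := by
      rw [RingHom.map_det]
      congr 1
      ext p q
      simp [Matrix.submatrix_apply, incl_base]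
    rw [hdet]
    refine Ideal.subset_span ⟨_, _, ?_, ?_, rfl⟩
    · intro p q hpq
      apply hr
      have h2 := congrArg Sigma.fst hpq
      simpa only [liftV_fst] using h2
    · intro p q hpq
      exact hc (congrArg Sigma.fst hpq)

lemma baseLap_supp (A : Fin n → Fin n → P) (d : Fin n → ℤ) :
    baseLap A (fun u => if d u < 0 then -1 else if 0 < d u then 1 else 0) = baseLap A d := by
  funext u w
  simp only [baseLap, Matrix.of_apply]
  by_cases h : u = w
  · subst h
    rcases lt_trichotomy (d u) 0 with h1 | h1 | h1
    · simp [h1]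
    · simp [h1]
    · have h2 : ¬ d u < 0 := by omega
      simp [h1, h2]
  · simp [h]

lemma base_not_top [Nontrivial P] (A : Fin n → Fin n → P) (d : Fin n → ℤ) (k : ℕ)
    (hk : n < k) : minorsIdeal (baseLap A d) k ≠ ⊤ := by
  have hempty : {d0 | ∃ r c : Fin k → Fin n, Function.Injective r ∧ Function.Injective c ∧
      d0 = ((baseLap A d).submatrix r c).det} = ∅ := by
    ext x
    simp only [Set.mem_setOf_eq, Set.mem_empty_iff_false, iff_false]
    rintro ⟨r, c, hr, hc, rfl⟩
    have := Fintype.card_le_of_injective r hr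
    simp at this
    omega
  rw [minorsIdeal, hempty, Ideal.span_empty]
  intro hbot
  have h1 : (1 : MvPolynomial (Fin n) P) ∈ (⊥ : Ideal (MvPolynomial (Fin n) P)) := by
    rw [hbot]; trivial
  exact one_ne_zero ((Submodule.mem_bot _).mp h1)

lemma zero_mem_twin (A : Fin n → Fin n → P) (d : Fin n → ℤ) :
    minorsIdeal (twinLap A d) 0 = ⊤ := by
  rw [Ideal.eq_top_iff_one]
  exact Ideal.subset_span ⟨Fin.elim0, Fin.elim0, fun a => a.elim0, fun a => a.elim0,
    by rw [Matrix.det_fin_zero]⟩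

end Aux2


/-- γ(G^d) = γ(G^{supp d}); in particular γ(G^d) ≤ n. -/
theorem corank_twin_graph {P : Type*} [CommRing P] [IsDomain P]
    [IsPrincipalIdealRing P] {n : ℕ} (A : Fin n → Fin n → P)
    (hA : ∀ u, A u u = 0) (d : Fin n → ℤ) :
    corank (twinLap A d) =
        corank (twinLap A fun u => if d u < 0 then -1 else if 0 < d u then 1 else 0) ∧
      corank (twinLap A d) ≤ n := by

  constructor
  · unfold corank
    congr 1
    ext k
    rw [Set.mem_setOf_eq, Set.mem_setOf_eq, twin_iff, twin_iff, baseLap_supp]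
  · unfold corank
    have hne : {k | minorsIdeal (twinLap A d) k = ⊤}.Nonempty :=
      ⟨0, by simpa [Set.mem_setOf_eq] using zero_mem_twin A d⟩
    apply csSup_le hne
    intro k hk
    rw [Set.mem_setOf_eq, twin_iff] at hk
    by_contra hn
    push_neg at hn
    exact base_not_top A d k hn hk
end

section
/- For m ≥ n ≥ 2, the (n+m)-th critical ideal of the complete bipartite graph K_{n,m} is the principal ideal generated by ∏_{r=1}^{n} x_r · ∏_{s=1}^{m} y_s − (∑_{r=1}^{n} ∏_{t≠r} x_t)·(∑_{s=1}^{m} ∏_{u≠s} y_u); equivalently, the determinant of the generalized Laplacian of K_{n,m} (block matrix [[diag(x), −J],[−J, diag(y)]] with J the all-ones matrix) equals this expression. -/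
open Matrix MvPolynomial

/-- Determinant of the bipartite-Laplacian block matrix over a field. -/
lemma field_bip_det {K : Type*} [Field K] {n m : ℕ} (x : Fin n → K) (y : Fin m → K)
    (hx : ∀ i, x i ≠ 0) (hy : ∀ j, y j ≠ 0) :
    (fromBlocks (diagonal x) (of fun _ _ => (-1 : K)) (of fun _ _ => (-1 : K))
      (diagonal y)).det =
    (∏ r, x r) * (∏ s, y s) -
      (∑ r, ∏ t ∈ Finset.univ.erase r, x t) * (∑ s, ∏ u ∈ Finset.univ.erase s, y u) := by
  haveI : Invertible x := ⟨fun i => (x i)⁻¹,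
    funext fun i => inv_mul_cancel₀ (hx i), funext fun i => mul_inv_cancel₀ (hx i)⟩
  haveI : Invertible (diagonal x) := diagonalInvertible x
  rw [det_fromBlocks₁₁, invOf_diagonal_eq]
  have hinv : (⅟ x : Fin n → K) = fun i => (x i)⁻¹ :=
    invOf_eq_right_inv (funext fun i => mul_inv_cancel₀ (hx i))
  rw [hinv]
  set s : K := ∑ i, (x i)⁻¹ with hs
  have hM : (of (fun _ _ => (-1 : K)) : Matrix (Fin m) (Fin n) K) *
      diagonal (fun i => (x i)⁻¹) * (of (fun _ _ => (-1 : K)) : Matrix (Fin n) (Fin m) K)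
      = of (fun _ _ => s) := by
    ext i j
    simp [Matrix.mul_apply, diagonal, Finset.mul_sum, hs]
  rw [hM]
  have key : diagonal y - of (fun _ _ => s) =
      diagonal y * (1 + replicateCol Unit (fun i => -(s * (y i)⁻¹)) * replicateRow Unit (fun _ => (1 : K))) := by
    ext i j
    rcases eq_or_ne i j with rfl | hij
    · simp [Matrix.mul_apply, diagonal, Matrix.one_apply, Finset.mul_sum,
        mul_inv_cancel₀ (hy i)]
      have h2 : y i * (1 + -(s * (y i)⁻¹)) = y i - y i * ((y i)⁻¹ * s) := by ring
      rw [h2, ← mul_assoc, mul_inv_cancel₀ (hy i), one_mul]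
    · simp [Matrix.mul_apply, diagonal, Matrix.one_apply, hij, Finset.mul_sum]
      field_simp [hy i]
  rw [key, det_mul, det_one_add_replicateCol_mul_replicateRow, det_diagonal, det_diagonal]
  have hsum : ∀ (r : Fin n), ∏ t ∈ Finset.univ.erase r, x t = (∏ t, x t) * (x r)⁻¹ := by
    intro r
    field_simp [hx r]
    rw [Finset.prod_erase_mul _ _ (Finset.mem_univ r)]
  have hsumy : ∀ (r : Fin m), ∏ t ∈ Finset.univ.erase r, y t = (∏ t, y t) * (y r)⁻¹ := by
    intro r
    field_simp [hy r]
    rw [Finset.prod_erase_mul _ _ (Finset.mem_univ r)]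
  simp only [hsum, hsumy, ← Finset.mul_sum, dotProduct, one_mul]
  have h1 : ∑ i, -(s * (y i)⁻¹) = -(s * ∑ i, (y i)⁻¹) := by
    simp [Finset.mul_sum]
  rw [h1, hs]
  ring

/-- For m ≥ n ≥ 2, the determinant of the generalized Laplacian of K_{n,m}
equals ∏x_r·∏y_s − (∑_r ∏_{t≠r} x_t)(∑_s ∏_{u≠s} y_u), and the (n+m)-th critical
ideal of K_{n,m} is the principal ideal generated by this expression. -/
theorem complete_bipartite_top_critical_ideal {n m : ℕ} (hn : 2 ≤ n) (hm : n ≤ m) :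
    let ι := Fin n ⊕ Fin m
    let R := MvPolynomial ι ℤ
    let L : Matrix ι ι R :=
      Matrix.of fun a b =>
        if a = b then X a else if a.isLeft = b.isLeft then 0 else -1
    let gen : R :=
      (∏ r : Fin n, X (Sum.inl r)) * (∏ s : Fin m, X (Sum.inr s)) -
        (∑ r : Fin n, ∏ t ∈ Finset.univ.erase r, X (Sum.inl t)) *
          (∑ s : Fin m, ∏ u ∈ Finset.univ.erase s, X (Sum.inr u))
    L.det = gen ∧ minorsIdeal L (n + m) = Ideal.span {gen} := by
  intro ι R L gen
  have hL : L = fromBlocks (diagonal fun i => X (Sum.inl i)) (of fun _ _ => -1)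
      (of fun _ _ => -1) (diagonal fun i => X (Sum.inr i)) := by
    refine Matrix.ext fun a b => ?_
    cases a <;> cases b <;>
      simp [ι, R, L, fromBlocks, diagonal, Matrix.of_apply, Sum.inl.injEq, Sum.inr.injEq]
  have hdet : L.det = gen := by
    set F := FractionRing R with hF
    have hinj : Function.Injective (algebraMap R F) := IsFractionRing.injective R F
    apply hinj
    rw [RingHom.map_det, RingHom.mapMatrix_apply, hL]
    have hmap : ((fromBlocks (diagonal fun i => X (Sum.inl i)) (of fun _ _ => -1)
        (of fun _ _ => -1) (diagonal fun i => X (Sum.inr i))).map (algebraMap R F)) =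
        fromBlocks (diagonal fun i => algebraMap R F (X (Sum.inl i))) (of fun _ _ => -1)
          (of fun _ _ => -1) (diagonal fun i => algebraMap R F (X (Sum.inr i))) := by
      refine Matrix.ext fun a b => ?_
      cases a <;> cases b <;>
        simp [Matrix.map_apply, fromBlocks, diagonal, apply_ite (algebraMap R F)]
    rw [hmap, field_bip_det _ _ (fun i => by
        simpa using (map_ne_zero_iff _ hinj).2 (X_ne_zero (R := ℤ) (Sum.inl i : ι)))
      (fun j => by
        simpa using (map_ne_zero_iff _ hinj).2 (X_ne_zero (R := ℤ) (Sum.inr j : ι)))]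
    simp [gen, map_sub, _root_.map_mul, map_prod, map_sum]
  refine ⟨hdet, le_antisymm ?_ ?_⟩
  · rw [minorsIdeal, Ideal.span_le]
    rintro d ⟨r, c, hr, hc, rfl⟩
    have hcard : Fintype.card ι = n + m := by simp [ι]
    have hrb : Function.Bijective r :=
      (Fintype.bijective_iff_injective_and_card r).2 ⟨hr, by simp [hcard]⟩
    have hcb : Function.Bijective c :=
      (Fintype.bijective_iff_injective_and_card c).2 ⟨hc, by simp [hcard]⟩
    set e := Equiv.ofBijective r hrb with he
    set f := Equiv.ofBijective c hcb with hf
    set σ : Equiv.Perm (Fin (n + m)) := f.trans e.symm with hσ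
    have hsub : L.submatrix r c = (L.submatrix e e).submatrix id σ := by
      ext i j
      simp [Matrix.submatrix_apply, hσ, he, hf, Equiv.ofBijective_apply]
      rw [show r ((Equiv.ofBijective r hrb).symm (c j)) = c j from
        (Equiv.ofBijective r hrb).apply_symm_apply (c j)]
    rw [hsub, det_permute', det_submatrix_equiv_self, hdet]
    exact Ideal.mem_span_singleton.2 ⟨(Equiv.Perm.sign σ : ℤ), mul_comm _ _⟩
  · rw [Ideal.span_le, Set.singleton_subset_iff]
    apply Ideal.subset_span
    refine ⟨finSumFinEquiv.symm, finSumFinEquiv.symm, finSumFinEquiv.symm.injective,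
      finSumFinEquiv.symm.injective, ?_⟩
    rw [det_submatrix_equiv_self, hdet]
end
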